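/- arXiv:1306.1457 — 11 statements merged into one kernel-verified Lean document; each statement's English description precedes it below -/
import Mathlib

section
/- Let ω ≥ 1 be a natural number and n₀ a natural number. Suppose the real sequence (a_n) is Z(2ω−1)-monotonously decreasing for n ≥ n₀ (i.e. a_{n+2ω−1} ≤ a_n for all n ≥ n₀) and a_n → 0 as n → ∞. Then the series ∑_{n=n₀}^∞ (−1)^n a_n converges. -/
/-!
Split the indices by their residue modulo the odd step `p = 2ω - 1`. Since `p` is odd,
`(-1)^(pk + r) = (-1)^r (-1)^k`, so along each residue class the series is, up to the sign
`(-1)^r`, an alternating series with antitone terms tending to `0`, which converges by the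
classical Leibniz test. Hence the partial sums over `p K` terms converge; as the terms tend to
`0`, so do the partial sums between two multiples of `p`.
-/

open Filter Finset Topology

theorem Finset.sum_range_mul_eq_sum_residues {M : Type*} [AddCommMonoid M] (g : ℕ → M)
    (p K : ℕ) : ∑ i ∈ range (p * K), g i = ∑ r ∈ range p, ∑ k ∈ range K, g (p * k + r) := by
  induction K with
  | zero => simp
  | succ K ih =>
    rw [mul_add_one, sum_range_add, ih, ← sum_add_distrib]
    simp only [sum_range_succ]

theorem tendsto_of_forall_tendsto_mul_add {X : Type*} (u : ℕ → X) {l : Filter X} {p : ℕ}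
    (hp : 0 < p) (h : ∀ j < p, Tendsto (fun K => u (p * K + j)) atTop l) :
    Tendsto u atTop l := by
  intro s hs
  obtain ⟨N, hN⟩ := eventually_atTop.1 <|
    (eventually_all_finset (range p)).2 fun j hj => h j (mem_range.1 hj) hs
  refine eventually_atTop.2 ⟨p * N, fun n hn => ?_⟩
  rw [← Nat.div_add_mod n p]
  exact hN (n / p) ((Nat.le_div_iff_mul_le hp).2 (by linarith)) _ (mem_range.2 (Nat.mod_lt n hp))

theorem tendsto_mul_add_atTop {p : ℕ} (hp : 0 < p) (j : ℕ) :
    Tendsto (fun K => p * K + j) atTop atTop :=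
  (tendsto_add_atTop_nat j).comp (tendsto_id.const_mul_atTop' hp)

theorem tendsto_sum_range_of_tendsto_sum_range_mul {E : Type*} [AddCommMonoid E]
    [TopologicalSpace E] [ContinuousAdd E] {g : ℕ → E} {p : ℕ} {S : E} (hp : 0 < p)
    (hg : Tendsto g atTop (𝓝 0))
    (h : Tendsto (fun K => ∑ i ∈ range (p * K), g i) atTop (𝓝 S)) :
    Tendsto (fun n => ∑ i ∈ range n, g i) atTop (𝓝 S) := by
  refine tendsto_of_forall_tendsto_mul_add _ hp fun j _ => ?_
  have tail : Tendsto (fun K => ∑ i ∈ range j, g (p * K + i)) atTop (𝓝 0) := by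
    simpa using tendsto_finsetSum (range j) fun i _ => hg.comp (tendsto_mul_add_atTop hp i)
  simpa only [sum_range_add, add_zero] using h.add tail

theorem exists_tendsto_alternating_series_of_odd_step {b : ℕ → ℝ} {p : ℕ} (hp : Odd p)
    (hb : ∀ n, b (n + p) ≤ b n) (hb0 : Tendsto b atTop (𝓝 0)) :
    ∃ S, Tendsto (fun n => ∑ i ∈ range n, (-1) ^ i * b i) atTop (𝓝 S) := by
  have hp0 : 0 < p := hp.pos
  have residue (r : ℕ) : ∃ L, Tendsto (fun K => ∑ k ∈ range K, (-1) ^ (p * k + r) * b (p * k + r))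
      atTop (𝓝 ((-1) ^ r * L)) := by
    have anti : Antitone fun k => b (p * k + r) :=
      antitone_nat_of_succ_le fun k => by simpa [mul_add_one, add_right_comm] using hb (p * k + r)
    obtain ⟨L, hL⟩ := anti.tendsto_alternating_series_of_tendsto_zero
      (hb0.comp (tendsto_mul_add_atTop hp0 r))
    refine ⟨L, ?_⟩
    simpa only [pow_add, pow_mul, hp.neg_one_pow, mul_sum, mul_left_comm, mul_assoc]
      using hL.const_mul ((-1) ^ r)
  choose L hL using residue
  refine ⟨∑ r ∈ range p, (-1) ^ r * L r, tendsto_sum_range_of_tendsto_sum_range_mul hp0 ?_ ?_⟩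
  · exact tendsto_zero_iff_norm_tendsto_zero.2 (by simpa using hb0.norm)
  · simp only [sum_range_mul_eq_sum_residues]
    exact tendsto_finsetSum _ fun r _ => hL r

/-- Generalized Leibniz theorem: if `(a n)` is `Z(2ω-1)`-monotonously decreasing
for `n ≥ n₀` and `a n → 0`, then `∑_{n=n₀}^∞ (-1)^n a n` converges. -/
theorem generalized_leibniz_convergence
    (ω n₀ : ℕ) (hω : 1 ≤ ω) (a : ℕ → ℝ)
    (hZ : ∀ n, n₀ ≤ n → a (n + (2 * ω - 1)) ≤ a n)
    (ha : Tendsto a atTop (nhds 0)) :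
    ∃ S : ℝ, Tendsto (fun m => ∑ n ∈ Finset.Icc n₀ m, (-1 : ℝ) ^ n * a n)
      atTop (nhds S) := by
  have hodd : Odd (2 * ω - 1) := ⟨ω - 1, by omega⟩
  obtain ⟨S, hS⟩ := exists_tendsto_alternating_series_of_odd_step (b := fun k => a (n₀ + k)) hodd
    (fun k => by simpa only [add_assoc] using hZ (n₀ + k) (Nat.le_add_right n₀ k))
    (ha.comp (tendsto_atTop_mono (Nat.le_add_left · n₀) tendsto_id))
  refine ⟨(-1) ^ n₀ * S, ?_⟩
  have shift (m : ℕ) : ∑ n ∈ Icc n₀ m, (-1 : ℝ) ^ n * a n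
      = (-1) ^ n₀ * ∑ k ∈ range (m + 1 - n₀), (-1) ^ k * a (n₀ + k) := by
    rw [← Ico_add_one_right_eq_Icc, sum_Ico_eq_sum_range, mul_sum]
    simp only [pow_add, mul_assoc]
  simp only [shift]
  exact (hS.comp ((tendsto_sub_atTop_nat n₀).comp (tendsto_add_atTop_nat 1))).const_mul _
end

section
/- Let ω ≥ 1 and suppose the real sequence (a_n) is Z(2ω−1)-monotonously decreasing for n ≥ n₀ and a_n → 0 as n → ∞, so that S = ∑_{n=n₀}^∞ (−1)^n a_n converges. Then for every m ≥ n₀ the remainder R_m = S − S_m, where S_m = ∑_{n=n₀}^m (−1)^n a_n, satisfies |R_m| ≤ ∑_{n=m+1}^{m+2ω−1} a_n. -/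
/-!
Write `p = 2ω - 1`. Along each residue class `m + 1 + k + j p` (`k < p`) the terms decrease, so
they decrease to `0` and are nonnegative. As `p` is odd, `(-1) ^ (j p) = (-1) ^ j`, so the part of
the tail `∑_{m < n ≤ m + K p}` coming from one residue class is, up to sign, an ordinary
alternating sum of a nonnegative decreasing sequence, hence bounded by its first term
`a (m + 1 + k)`. Summing over `k` bounds every such partial tail, and the bound passes to the
limit `K → ∞`.
-/

open Filter Finset Topology

theorem sum_range_mul_eq_sum_range_sum_range {M : Type*} [AddCommMonoid M] (g : ℕ → M)
    (p K : ℕ) :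
    ∑ i ∈ range (K * p), g i = ∑ k ∈ range p, ∑ j ∈ range K, g (j * p + k) := by
  rw [sum_comm]
  induction K with
  | zero => simp
  | succ K ih => rw [add_mul, one_mul, sum_range_add, ih, sum_range_succ]

section AlternatingSum

variable {E : Type*} [CommRing E] [LinearOrder E] [IsStrictOrderedRing E]

theorem sum_range_neg_one_pow_mul_mem_Icc {b : ℕ → E} (hb : Antitone b) (hb0 : ∀ j, 0 ≤ b j)
    (K : ℕ) : ∑ j ∈ range K, (-1) ^ j * b j ∈ Set.Icc 0 (b 0) := by
  induction K generalizing b with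
  | zero => simpa using hb0 0
  | succ K ih =>
    obtain ⟨h0, h1⟩ := ih (b := fun j ↦ b (j + 1)) (fun i j hij ↦ hb (by omega)) (hb0 <| · + 1)
    have hrec : ∑ j ∈ range (K + 1), (-1) ^ j * b j =
        b 0 - ∑ j ∈ range K, (-1) ^ j * b (j + 1) := by
      simp [sum_range_succ', pow_succ, sub_eq_add_neg, add_comm]
    rw [zero_add] at h1
    rw [hrec]
    constructor <;> linarith [hb (Nat.zero_le 1)]

theorem abs_sum_range_neg_one_pow_mul_le {b : ℕ → E} (hb : Antitone b) (hb0 : ∀ j, 0 ≤ b j)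
    (K : ℕ) : |∑ j ∈ range K, (-1) ^ j * b j| ≤ b 0 := by
  obtain ⟨h0, h1⟩ := sum_range_neg_one_pow_mul_mem_Icc hb hb0 K
  exact abs_le.2 ⟨by linarith [hb0 0], h1⟩

theorem abs_sum_range_mul_neg_one_pow_mul_le {p : ℕ} (hp : Odd p) {f : ℕ → E}
    (hf0 : ∀ n, 0 ≤ f n) (hf : ∀ n, f (n + p) ≤ f n) (K : ℕ) :
    |∑ i ∈ range (K * p), (-1) ^ i * f i| ≤ ∑ k ∈ range p, f k := by
  rw [sum_range_mul_eq_sum_range_sum_range]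
  refine (abs_sum_le_sum_abs _ _).trans (sum_le_sum fun k _ ↦ ?_)
  have hsign : ∀ j, (-1 : E) ^ (j * p + k) = (-1) ^ k * (-1) ^ j := fun j ↦ by
    rw [pow_add, mul_comm j, pow_mul, hp.neg_one_pow, mul_comm]
  simp_rw [hsign, mul_assoc, ← mul_sum, abs_mul, abs_neg_one_pow, one_mul]
  have hanti : Antitone fun j ↦ f (j * p + k) := antitone_nat_of_succ_le fun j ↦ by
    simpa [add_mul, add_right_comm] using hf (j * p + k)
  simpa using abs_sum_range_neg_one_pow_mul_le hanti (fun j ↦ hf0 _) K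

end AlternatingSum

theorem le_of_tendsto_of_forall_add_le {α : Type*} [Preorder α] [TopologicalSpace α]
    [OrderClosedTopology α] {a : ℕ → α} {l : α} {p n₀ : ℕ} (hp : 0 < p)
    (h : ∀ n, n₀ ≤ n → a (n + p) ≤ a n) (ha : Tendsto a atTop (𝓝 l)) {n : ℕ} (hn : n₀ ≤ n) :
    l ≤ a n := by
  have hanti : Antitone fun t ↦ a (n + t * p) := antitone_nat_of_succ_le fun t ↦ by
    simpa [add_mul, add_assoc] using h (n + t * p) (by omega)
  have hlim : Tendsto (fun t ↦ n + t * p) atTop atTop :=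
    tendsto_atTop_mono (fun t ↦ Nat.le_add_left_of_le (Nat.le_mul_of_pos_right t hp)) tendsto_id
  simpa using hanti.le_of_tendsto (ha.comp hlim) 0

theorem sum_Icc_add_one_add_eq_sum_range {M : Type*} [AddCommMonoid M] (g : ℕ → M) (m N : ℕ) :
    ∑ n ∈ Icc (m + 1) (m + N), g n = ∑ i ∈ range N, g (m + 1 + i) := by
  rw [← Ico_add_one_right_eq_Icc, sum_Ico_eq_sum_range]
  congr 2
  omega

theorem sum_Icc_eq_add_sum_Icc {M : Type*} [AddCommMonoid M] (g : ℕ → M) {n₀ m k : ℕ}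
    (hm : n₀ ≤ m + 1) (hk : m ≤ k) :
    ∑ n ∈ Icc n₀ k, g n = ∑ n ∈ Icc n₀ m, g n + ∑ n ∈ Icc (m + 1) k, g n := by
  simp only [← Ico_add_one_right_eq_Icc]
  exact (sum_Ico_consecutive g hm (by omega)).symm

theorem Filter.Tendsto.tendsto_sum_Icc_add_one {M : Type*} [AddCommGroup M] [TopologicalSpace M]
    [IsTopologicalAddGroup M] {g : ℕ → M} {n₀ : ℕ} {S : M}
    (hS : Tendsto (fun m ↦ ∑ n ∈ Icc n₀ m, g n) atTop (𝓝 S)) {m : ℕ} (hm : n₀ ≤ m + 1) :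
    Tendsto (fun N ↦ ∑ n ∈ Icc (m + 1) (m + N), g n) atTop (𝓝 (S - ∑ n ∈ Icc n₀ m, g n)) := by
  have h := (hS.comp (tendsto_atTop_mono (Nat.le_add_left · m) tendsto_id)).sub_const
    (∑ n ∈ Icc n₀ m, g n)
  refine h.congr fun N ↦ ?_
  simp only [Function.comp_apply, sum_Icc_eq_add_sum_Icc g hm (Nat.le_add_right m N),
    add_sub_cancel_left]

/-- Remainder estimate for the generalized Leibniz theorem:
`|S - S_m| ≤ ∑_{n=m+1}^{m+2ω-1} a n` for every `m ≥ n₀`. -/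
theorem generalized_leibniz_remainder_sum_bound
    (ω n₀ : ℕ) (hω : 1 ≤ ω) (a : ℕ → ℝ) (S : ℝ)
    (hZ : ∀ n, n₀ ≤ n → a (n + (2 * ω - 1)) ≤ a n)
    (ha : Tendsto a atTop (nhds 0))
    (hS : Tendsto (fun m => ∑ n ∈ Finset.Icc n₀ m, (-1 : ℝ) ^ n * a n)
      atTop (nhds S)) :
    ∀ m, n₀ ≤ m →
      |S - ∑ n ∈ Finset.Icc n₀ m, (-1 : ℝ) ^ n * a n| ≤
        ∑ n ∈ Finset.Icc (m + 1) (m + (2 * ω - 1)), a n := by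
  intro m hm
  set p := 2 * ω - 1
  have hp : Odd p := ⟨ω - 1, by omega⟩
  have hbound (K : ℕ) : |∑ n ∈ Icc (m + 1) (m + K * p), (-1 : ℝ) ^ n * a n| ≤
      ∑ n ∈ Icc (m + 1) (m + p), a n := by
    simp_rw [sum_Icc_add_one_add_eq_sum_range, pow_add (-1 : ℝ) (m + 1), mul_assoc, ← mul_sum,
      abs_mul, abs_neg_one_pow, one_mul]
    exact abs_sum_range_mul_neg_one_pow_mul_le hp
      (fun i ↦ le_of_tendsto_of_forall_add_le hp.pos hZ ha (by omega))
      (fun i ↦ by simpa only [add_assoc] using hZ (m + 1 + i) (by omega)) K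
  have hlim := (hS.tendsto_sum_Icc_add_one (by omega : n₀ ≤ m + 1)).comp
    (tendsto_id.atTop_mul_const' hp.pos)
  exact le_of_tendsto' hlim.abs hbound
end

section
/- Let ω ≥ 1 and suppose the real sequence (a_n) is Z(2ω−1)-monotonously decreasing for n ≥ n₀ and a_n → 0 as n → ∞, so that S = ∑_{n=n₀}^∞ (−1)^n a_n converges. Then for every m ≥ n₀ there exist real numbers θ_1, ..., θ_{2ω−1}, each in [0,1], such that S − S_m = ∑_{j=1}^{2ω−1} (−1)^{m+j} θ_j a_{m+j}. -/
open Filter Finset Topology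

/-!
Split the tail `∑_{n > m} (-1)^n a_n` into the `2ω - 1` residue classes `n = m + j + k(2ω - 1)`.
Since the step `2ω - 1` is odd, the signs alternate along each class, and `Z(2ω - 1)`-monotonicity
makes the terms of each class decrease; so each class is a Leibniz series whose sum lies between
`0` and its first term `a_{m+j}`, i.e. equals `θ_j a_{m+j}` with `θ_j ∈ [0, 1]`.
-/

theorem Antitone.exists_tendsto_alternating_series_mem_Icc {b : ℕ → ℝ} (hb : Antitone b)
    (hb0 : Tendsto b atTop (𝓝 0)) :
    ∃ l ∈ Set.Icc 0 (b 0), Tendsto (fun K ↦ ∑ k ∈ range K, (-1) ^ k * b k) atTop (𝓝 l) := by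
  obtain ⟨l, hl⟩ := hb.tendsto_alternating_series_of_tendsto_zero hb0
  refine ⟨l, ⟨?_, ?_⟩, hl⟩
  · simpa using hb.alternating_series_le_tendsto hl 0
  · simpa using hb.tendsto_le_alternating_series hl 0

theorem exists_mem_Icc_eq_mul_of_mem_Icc {𝕜 : Type*} [Field 𝕜] [LinearOrder 𝕜]
    [IsStrictOrderedRing 𝕜] {t x : 𝕜} (ht : t ∈ Set.Icc 0 x) :
    ∃ θ ∈ Set.Icc (0 : 𝕜) 1, t = θ * x := by
  obtain rfl | hx := ht.1.trans ht.2 |>.eq_or_lt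
  · exact ⟨0, by simp, by simp [le_antisymm ht.2 ht.1]⟩
  · exact ⟨t / x, ⟨div_nonneg ht.1 hx.le, div_le_one_of_le₀ ht.2 hx.le⟩, by field_simp⟩

theorem Odd.neg_one_pow_add_mul {R : Type*} [Monoid R] [HasDistribNeg R] {w : ℕ} (hw : Odd w)
    (i k : ℕ) : (-1 : R) ^ (i + k * w) = (-1) ^ i * (-1) ^ k := by
  rw [pow_add, mul_comm k, pow_mul, hw.neg_one_pow]

theorem Finset.sum_Ioc_add_mul_eq_sum_sum {M : Type*} [AddCommMonoid M] (f : ℕ → M)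
    (m w K : ℕ) :
    ∑ n ∈ Ioc m (m + K * w), f n = ∑ j ∈ Icc 1 w, ∑ k ∈ range K, f (m + j + k * w) := by
  induction K with
  | zero => simp
  | succ K ih =>
    have hblock : ∑ n ∈ Ioc (m + K * w) (m + (K + 1) * w), f n =
        ∑ j ∈ Icc 1 w, f (m + j + K * w) := by
      have hshift := map_add_left_Ioc 0 w (m + K * w)
      rw [add_zero] at hshift
      rw [show m + (K + 1) * w = m + K * w + w by ring, ← hshift, sum_map,
        ← Icc_add_one_left_eq_Ioc]
      exact sum_congr rfl fun j _ ↦ by simp only [addLeftEmbedding_apply]; ring_nf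
    rw [← sum_Ioc_consecutive _ (Nat.le_add_right m _)
      (Nat.add_le_add_left (Nat.mul_le_mul_right w K.le_succ) m), ih, hblock,
      ← sum_add_distrib]
    simp only [sum_range_succ]

theorem tendsto_add_mul_atTop {w : ℕ} (hw : 1 ≤ w) (c : ℕ) :
    Tendsto (fun k ↦ c + k * w) atTop atTop :=
  tendsto_atTop_mono (fun k ↦ le_add_left (Nat.le_mul_of_pos_right k hw)) tendsto_id

theorem tendsto_sum_Ioc_of_tendsto_sum_Icc {G : Type*} [AddCommGroup G] [TopologicalSpace G]
    [IsTopologicalAddGroup G] {f : ℕ → G} {n₀ m : ℕ} {S : G} (hm : n₀ ≤ m)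
    (hS : Tendsto (fun N ↦ ∑ n ∈ Icc n₀ N, f n) atTop (𝓝 S)) :
    Tendsto (fun N ↦ ∑ n ∈ Ioc m N, f n) atTop (𝓝 (S - ∑ n ∈ Icc n₀ m, f n)) := by
  refine (hS.sub_const _).congr' ?_
  filter_upwards [eventually_ge_atTop m] with N hN
  have hunion : Icc n₀ m ∪ Ioc m N = Icc n₀ N := by
    rw [← coe_inj]; push_cast; exact Set.Icc_union_Ioc_eq_Icc hm hN
  rw [← hunion, sum_union (disjoint_left.2 fun n h h' ↦ by simp at h h'; omega)]
  abel

/-- Exact form of the remainder of a `Z(2ω-1)`-series: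
`S - S_m = ∑_{j=1}^{2ω-1} (-1)^{m+j} θ_j a_{m+j}` with `θ_j ∈ [0,1]`. -/
theorem generalized_leibniz_remainder_theta_form
    (ω n₀ : ℕ) (hω : 1 ≤ ω) (a : ℕ → ℝ) (S : ℝ)
    (hZ : ∀ n, n₀ ≤ n → a (n + (2 * ω - 1)) ≤ a n)
    (ha : Tendsto a atTop (nhds 0))
    (hS : Tendsto (fun m => ∑ n ∈ Finset.Icc n₀ m, (-1 : ℝ) ^ n * a n)
      atTop (nhds S)) :
    ∀ m, n₀ ≤ m →
      ∃ θ : ℕ → ℝ, (∀ j ∈ Finset.Icc 1 (2 * ω - 1), 0 ≤ θ j ∧ θ j ≤ 1) ∧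
        S - ∑ n ∈ Finset.Icc n₀ m, (-1 : ℝ) ^ n * a n =
          ∑ j ∈ Finset.Icc 1 (2 * ω - 1), (-1 : ℝ) ^ (m + j) * θ j * a (m + j) := by
  intro m hm
  set w := 2 * ω - 1
  have hw : 1 ≤ w := by omega
  have hodd : Odd w := ⟨ω - 1, by omega⟩
  have hanti (j : ℕ) : Antitone fun k ↦ a (m + j + k * w) := antitone_nat_of_succ_le fun k ↦ by
    simpa only [add_mul, one_mul, ← add_assoc] using hZ (m + j + k * w) (by omega)
  choose T hT hTlim using fun j ↦ (hanti j).exists_tendsto_alternating_series_mem_Icc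
    (ha.comp (tendsto_add_mul_atTop hw (m + j)))
  have hrem : S - ∑ n ∈ Icc n₀ m, (-1 : ℝ) ^ n * a n = ∑ j ∈ Icc 1 w, (-1) ^ (m + j) * T j := by
    refine tendsto_nhds_unique
      ((tendsto_sum_Ioc_of_tendsto_sum_Icc hm hS).comp (tendsto_add_mul_atTop hw m)) ?_
    simp only [Function.comp_def, sum_Ioc_add_mul_eq_sum_sum, hodd.neg_one_pow_add_mul, mul_assoc,
      ← mul_sum]
    exact tendsto_finsetSum _ fun j _ ↦ (hTlim j).const_mul _
  choose θ hθ hTθ using fun j ↦ exists_mem_Icc_eq_mul_of_mem_Icc (hT j)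
  refine ⟨θ, fun j _ ↦ hθ j, ?_⟩
  simp only [hrem, hTθ, zero_mul, add_zero, mul_assoc]
end

section
/- Let f : ℝ → ℝ and x₀ ∈ ℝ. Suppose f is Zv-monotonously decreasing on [x₀, ∞), i.e. there exists T > 0 such that f(x+T+τ) ≤ f(x) for all x ≥ x₀ and all τ > 0, and suppose f(x) → 0 as x → +∞. Then for any natural number n₀ ≥ x₀, the series ∑_{n=n₀}^∞ (−1)^n f(n) converges. -/
/-!
Pick an odd integer `K > T`. Along each residue class `n₀ + r + K i` the values of `f` decrease
in `i` and tend to `0`, so the Leibniz test applies to `∑ᵢ (-1)ⁱ f(n₀ + r + K i)`; since `K` is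
odd, `(-1)^(n₀ + r + K i) = (-1)^(n₀ + r) (-1)ⁱ`, so the partial sums of the whole series up to
multiples of `K` are a fixed signed combination of these `K` convergent series. As the terms tend
to `0`, the remaining partial sums differ from those by fewer than `K` vanishing terms.
-/

open Finset Filter Topology

theorem Finset.sum_range_mul_eq_sum_sum {M : Type*} [AddCommMonoid M] (a : ℕ → M) (K m : ℕ) :
    ∑ j ∈ range (K * m), a j = ∑ r ∈ range K, ∑ i ∈ range m, a (r + K * i) := by
  induction m with
  | zero => simp
  | succ m ih =>
    rw [Nat.mul_succ, sum_range_add, ih, ← sum_add_distrib]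
    refine sum_congr rfl fun r _ ↦ ?_
    rw [sum_range_succ, add_comm (K * m) r]

theorem tendsto_sum_range_of_tendsto_sum_range_mul_s6 {E : Type*} [SeminormedAddCommGroup E]
    {a : ℕ → E} {K : ℕ} {L : E} (hK : K ≠ 0) (ha : Tendsto a atTop (𝓝 0))
    (h : Tendsto (fun m ↦ ∑ j ∈ range (K * m), a j) atTop (𝓝 L)) :
    Tendsto (fun n ↦ ∑ j ∈ range n, a j) atTop (𝓝 L) := by
  have hsplit : ∀ n, ∑ j ∈ range n, a j =
      ∑ j ∈ range (K * (n / K)), a j + ∑ j ∈ range (n % K), a (K * (n / K) + j) := by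
    intro n
    rw [← sum_range_add, Nat.div_add_mod]
  have hblock : Tendsto (fun m ↦ K * m) atTop atTop :=
    tendsto_id.const_mul_atTop' (Nat.pos_of_ne_zero hK)
  have hbound : Tendsto (fun n ↦ ∑ j ∈ range K, ‖a (K * (n / K) + j)‖) atTop (𝓝 0) := by
    rw [← sum_const_zero (s := range K)]
    refine tendsto_finsetSum _ fun j _ ↦ ?_
    exact tendsto_norm_zero.comp <| ha.comp <| (tendsto_add_atTop_nat j).comp <|
      hblock.comp (Nat.tendsto_div_const_atTop hK)
  have htail : Tendsto (fun n ↦ ∑ j ∈ range (n % K), a (K * (n / K) + j)) atTop (𝓝 0) :=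
    squeeze_zero_norm (fun n ↦ (norm_sum_le _ _).trans <| sum_le_sum_of_subset_of_nonneg
      (range_subset_range.2 (Nat.mod_lt n (Nat.pos_of_ne_zero hK)).le)
      fun _ _ _ ↦ norm_nonneg _) hbound
  have := (h.comp (Nat.tendsto_div_const_atTop hK)).add htail
  rw [add_zero] at this
  exact this.congr fun n ↦ (hsplit n).symm

theorem tendsto_sum_Icc_of_tendsto_sum_range {E : Type*} [AddCommMonoid E] [TopologicalSpace E]
    {g : ℕ → E} {n₀ : ℕ} {S : E}
    (h : Tendsto (fun N ↦ ∑ i ∈ range N, g (n₀ + i)) atTop (𝓝 S)) :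
    Tendsto (fun m ↦ ∑ n ∈ Icc n₀ m, g n) atTop (𝓝 S) := by
  refine (h.comp <| (tendsto_sub_atTop_nat n₀).comp (tendsto_add_atTop_nat 1)).congr fun m ↦ ?_
  rw [Function.comp_apply, Function.comp_apply, ← sum_Ico_eq_sum_range, Ico_add_one_right_eq_Icc]

/-- `f` is Zv-monotonously decreasing on `[x₀, ∞)` with the constant `T`. -/
def ZvAntitoneOn (f : ℝ → ℝ) (x₀ T : ℝ) : Prop :=
  ∀ x, x₀ ≤ x → ∀ τ, 0 < τ → f (x + T + τ) ≤ f x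

namespace ZvAntitoneOn

variable {f : ℝ → ℝ} {x₀ T c x : ℝ}

theorem antitone_add_nat_mul (hf : ZvAntitoneOn f x₀ T) (hT : 0 ≤ T) (hTc : T < c)
    (hx : x₀ ≤ x) : Antitone fun i : ℕ ↦ f (x + i * c) := by
  refine antitone_nat_of_succ_le fun i ↦ ?_
  have hxi : x₀ ≤ x + i * c := by nlinarith [i.cast_nonneg (α := ℝ)]
  simpa [add_mul, ← add_assoc] using hf _ hxi (c - T) (by linarith)

theorem exists_tendsto_alternating_sum (hf : ZvAntitoneOn f x₀ T) (hT : 0 ≤ T) (hTc : T < c)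
    (hx : x₀ ≤ x) (hf0 : Tendsto f atTop (𝓝 0)) :
    ∃ l, Tendsto (fun m ↦ ∑ i ∈ range m, (-1) ^ i * f (x + i * c)) atTop (𝓝 l) :=
  (hf.antitone_add_nat_mul hT hTc hx).tendsto_alternating_series_of_tendsto_zero <|
    hf0.comp <| tendsto_atTop_add_const_left _ x <|
      tendsto_natCast_atTop_atTop.atTop_mul_const (hT.trans_lt hTc)

end ZvAntitoneOn

/-- If `f` is `Zv`-monotonously decreasing on `[x₀, ∞)` and `f(x) → 0` as
`x → +∞`, then the alternating series `∑_{n=n₀}^∞ (-1)^n f(n)` converges. -/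
theorem Zv_monotone_alternating_series_converges
    (f : ℝ → ℝ) (x₀ : ℝ)
    (hZv : ∃ T : ℝ, 0 < T ∧ ∀ x : ℝ, x₀ ≤ x → ∀ τ : ℝ, 0 < τ →
      f (x + T + τ) ≤ f x)
    (hf : Tendsto f atTop (nhds 0))
    (n₀ : ℕ) (hn₀ : x₀ ≤ (n₀ : ℝ)) :
    ∃ S : ℝ, Tendsto (fun m => ∑ n ∈ Finset.Icc n₀ m, (-1 : ℝ) ^ n * f n)
      atTop (nhds S) := by
  obtain ⟨T, hT, hfT : ZvAntitoneOn f x₀ T⟩ := hZv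
  obtain ⟨K, hK, hTK⟩ : ∃ K : ℕ, Odd K ∧ T < K :=
    ⟨2 * ⌈T⌉₊ + 1, odd_two_mul_add_one _, by push_cast; linarith [Nat.le_ceil T]⟩
  have hres (r : ℕ) : ∃ l, Tendsto (fun m ↦ ∑ i ∈ range m,
      (-1) ^ i * f ((n₀ + r : ℕ) + i * K)) atTop (𝓝 l) :=
    hfT.exists_tendsto_alternating_sum hT.le hTK
      (by push_cast; linarith [r.cast_nonneg (α := ℝ)]) hf
  choose l hl using hres
  have hterm : Tendsto (fun j ↦ (-1 : ℝ) ^ (n₀ + j) * f (n₀ + j : ℕ)) atTop (𝓝 0) := by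
    refine squeeze_zero_norm (fun j ↦ ?_) (tendsto_norm_zero.comp <| hf.comp <|
      tendsto_natCast_atTop_atTop.comp <| tendsto_atTop_mono (Nat.le_add_left · n₀) tendsto_id)
    simp only [norm_mul, norm_pow, norm_neg, norm_one, one_pow, one_mul]
    exact le_rfl
  refine ⟨∑ r ∈ range K, (-1) ^ (n₀ + r) * l r, tendsto_sum_Icc_of_tendsto_sum_range <|
    tendsto_sum_range_of_tendsto_sum_range_mul_s6 hK.pos.ne' hterm ?_⟩
  simp_rw [sum_range_mul_eq_sum_sum]
  refine tendsto_finsetSum _ fun r _ ↦ ((hl r).const_mul _).congr fun m ↦ ?_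
  rw [mul_sum]
  refine sum_congr rfl fun i _ ↦ ?_
  rw [← add_assoc, pow_add _ (n₀ + r), pow_mul, hK.neg_one_pow, mul_assoc,
    Nat.cast_add _ (K * i), Nat.cast_mul, mul_comm (K : ℝ)]
end

section
/- Let 0 < α ≤ 1, M > 0, and let p : ℝ → ℝ satisfy |p(x)| ≤ M for all x. Define f(x) = x^α + p(x)·x^{α−1} for x > 0. Then f is Zv-monotonously increasing on some ray: there exist T > 0 and x₀ > 0 such that for all x ≥ x₀ and all τ > 0, f(x+T+τ) ≥ f(x). -/
/-!
Write `f(x) = x^α + p(x) x^(α-1)` and `g(t) = t^α - M t^(α-1)`; `g` is increasing on `(0, ∞)` and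
`f ≥ g` there, while `f(x) ≤ x^α + M x^(α-1)`. Concavity of `t ↦ t^α` (its tangent at `x + T`) gives
`(x+T)^α - x^α ≥ α T (x+T)^(α-1) ≥ α T x^(α-1) / 2` as soon as `T ≤ x`, which is at least
`2 M x^(α-1)` when `α T ≥ 4 M`. This gap absorbs the perturbation at both ends:
`f(x) ≤ g(x+T) ≤ g(x+T+τ) ≤ f(x+T+τ)`.
-/

open Set

namespace Real

variable {α : ℝ}

theorem rpow_le_rpow_add_mul_rpow_sub_one_mul_sub (hα0 : 0 ≤ α) (hα1 : α ≤ 1) {x y : ℝ}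
    (hx : 0 ≤ x) (hy : 0 < y) : x ^ α ≤ y ^ α + α * y ^ (α - 1) * (x - y) := by
  have bernoulli := rpow_one_add_le_one_add_mul_self
    (show -1 ≤ (x - y) / y by rw [le_div_iff₀ hy]; linarith) hα0 hα1
  rw [show 1 + (x - y) / y = x / y by field_simp; ring, div_rpow hx hy.le,
    div_le_iff₀ (rpow_pos_of_pos hy α)] at bernoulli
  rw [rpow_sub_one hy.ne']
  calc x ^ α ≤ (1 + α * ((x - y) / y)) * y ^ α := bernoulli
    _ = y ^ α + α * (y ^ α / y) * (x - y) := by field_simp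

theorem rpow_sub_one_le_two_mul_rpow_sub_one_add (hα0 : 0 ≤ α) (hα1 : α ≤ 1) {x T : ℝ}
    (hx : 0 < x) (hT : 0 ≤ T) (hTx : T ≤ x) : x ^ (α - 1) ≤ 2 * (x + T) ^ (α - 1) :=
  calc x ^ (α - 1) ≤ 2 ^ α * x ^ (α - 1) := le_mul_of_one_le_left (by positivity)
          (one_le_rpow one_le_two hα0)
    _ = 2 * (2 * x) ^ (α - 1) := by
          rw [mul_rpow zero_le_two hx.le, rpow_sub_one two_ne_zero]; field_simp
    _ ≤ 2 * (x + T) ^ (α - 1) := by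
          gcongr 2 * ?_
          exact rpow_le_rpow_of_nonpos (by linarith) (by linarith) (by linarith)

theorem mul_mul_rpow_sub_one_le_two_mul_rpow_add_sub_rpow (hα0 : 0 ≤ α) (hα1 : α ≤ 1) {x T : ℝ}
    (hT : 0 < T) (hTx : T ≤ x) : α * T * x ^ (α - 1) ≤ 2 * ((x + T) ^ α - x ^ α) := by
  have tangent := rpow_le_rpow_add_mul_rpow_sub_one_mul_sub hα0 hα1 (hT.le.trans hTx)
    (show 0 < x + T by linarith)
  have doubling := rpow_sub_one_le_two_mul_rpow_sub_one_add hα0 hα1 (hT.trans_le hTx) hT.le hTx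
  have hαT : 0 ≤ α * T := by positivity
  linarith [mul_le_mul_of_nonneg_left doubling hαT]

theorem monotoneOn_rpow_sub_mul_rpow_sub_one (hα0 : 0 ≤ α) (hα1 : α ≤ 1) {M : ℝ} (hM : 0 ≤ M) :
    MonotoneOn (fun t : ℝ ↦ t ^ α - M * t ^ (α - 1)) (Ioi 0) := fun x hx y _ hxy ↦ by
  have h₁ : x ^ α ≤ y ^ α := rpow_le_rpow (le_of_lt hx) hxy hα0
  have h₂ : y ^ (α - 1) ≤ x ^ (α - 1) := rpow_le_rpow_of_nonpos hx hxy (by linarith)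
  dsimp only
  linarith [mul_le_mul_of_nonneg_left h₂ hM]

end Real

theorem rpow_add_mul_rpow_sub_one_le_of_abs_le {α M T x τ : ℝ} {p : ℝ → ℝ}
    (hp : ∀ y, |p y| ≤ M) (hα0 : 0 ≤ α) (hα1 : α ≤ 1) (hT : 0 < T) (hMT : 4 * M ≤ α * T)
    (hTx : T ≤ x) (hτ : 0 ≤ τ) :
    x ^ α + p x * x ^ (α - 1) ≤ (x + T + τ) ^ α + p (x + T + τ) * (x + T + τ) ^ (α - 1) := by
  have hx : 0 < x := hT.trans_le hTx
  have hM : 0 ≤ M := (abs_nonneg _).trans (hp 0)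
  have hpx : p x ≤ M := (abs_le.mp (hp x)).2
  have hpy : -M ≤ p (x + T + τ) := (abs_le.mp (hp (x + T + τ))).1
  have hxT : (x + T) ^ (α - 1) ≤ x ^ (α - 1) :=
    Real.rpow_le_rpow_of_nonpos hx (by linarith) (by linarith)
  have gain := Real.mul_mul_rpow_sub_one_le_two_mul_rpow_add_sub_rpow hα0 hα1 hT hTx
  have hx1 : 0 < x ^ (α - 1) := Real.rpow_pos_of_pos hx _
  calc x ^ α + p x * x ^ (α - 1)
      ≤ x ^ α + M * x ^ (α - 1) := by gcongr
    _ ≤ (x + T) ^ α - M * (x + T) ^ (α - 1) := by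
        linarith [mul_le_mul_of_nonneg_right hMT hx1.le, mul_le_mul_of_nonneg_left hxT hM]
    _ ≤ (x + T + τ) ^ α - M * (x + T + τ) ^ (α - 1) :=
        Real.monotoneOn_rpow_sub_mul_rpow_sub_one hα0 hα1 hM (mem_Ioi.mpr (by linarith))
          (mem_Ioi.mpr (by linarith)) (by linarith)
    _ ≤ (x + T + τ) ^ α + p (x + T + τ) * (x + T + τ) ^ (α - 1) := by
        have hy1 : 0 < (x + T + τ) ^ (α - 1) := Real.rpow_pos_of_pos (by linarith) _
        linarith [mul_le_mul_of_nonneg_right hpy hy1.le]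

/-- For `0 < α ≤ 1` and bounded `p`, the function `f(x) = x^α + p(x)·x^(α-1)`
is `Zv`-monotonously increasing on some ray `[x₀, ∞)`. -/
theorem Zv_monotone_increasing_rpow_perturbation
    (α M : ℝ) (hα0 : 0 < α) (hα1 : α ≤ 1) (hM : 0 < M)
    (p : ℝ → ℝ) (hp : ∀ x : ℝ, |p x| ≤ M) :
    ∃ T : ℝ, 0 < T ∧ ∃ x₀ : ℝ, 0 < x₀ ∧ ∀ x : ℝ, x₀ ≤ x → ∀ τ : ℝ, 0 < τ →
      x ^ α + p x * x ^ (α - 1) ≤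
        (x + T + τ) ^ α + p (x + T + τ) * (x + T + τ) ^ (α - 1) := by
  have hT : 0 < 4 * M / α := by positivity
  refine ⟨4 * M / α, hT, 4 * M / α, hT, fun x hx τ hτ ↦ ?_⟩
  exact rpow_add_mul_rpow_sub_one_le_of_abs_le hp hα0.le hα1 hT
    (by rw [mul_div_cancel₀ _ hα0.ne']) hx hτ.le
end

section
/- Let 0 ≤ β < 1, M > 0, and let p : ℕ → ℝ satisfy |p(n)| ≤ M for all n. Then for any natural number n₀ > M, the series ∑_{n=n₀}^∞ (−1)^n · n^β / (n + p(n)) converges. -/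
/-!
Since `p` is bounded, `n ^ β / (n + p n) = n ^ (β - 1) + O(n ^ (β - 2))`. The series is therefore
Leibniz's alternating series `∑ (-1) ^ n n ^ (β - 1)`, which converges as `β < 1`, plus an
absolutely convergent one. Only the tail matters, so the finitely many indices with
`n + p n ≤ 0` are harmless.
-/

open Filter Finset Topology SummationFilter

section ConditionalSeries

variable {E : Type*} [AddCommGroup E] [TopologicalSpace E]

theorem summable_conditional_nat_iff {f : ℕ → E} :
    Summable f (conditional ℕ) ↔ ∃ S, Tendsto (fun m ↦ ∑ i ∈ range m, f i) atTop (𝓝 S) := by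
  simp only [Summable, HasSum, conditional_filter_eq_map_range, tendsto_map'_iff]
  rfl

variable [IsTopologicalAddGroup E]

theorem Summable.conditional_congr_atTop {f g : ℕ → E} (hf : Summable f (conditional ℕ))
    (hfg : f =ᶠ[atTop] g) : Summable g (conditional ℕ) := by
  have hdiff : Summable (g - f) :=
    summable_zero.congr_atTop (hfg.mono fun n hn ↦ by simp [hn])
  simpa using hf.add (hdiff.mono_filter (conditional ℕ).le_atTop)

theorem Summable.exists_tendsto_sum_Icc {f : ℕ → E} (hf : Summable f (conditional ℕ)) (n₀ : ℕ) :
    ∃ S, Tendsto (fun m ↦ ∑ n ∈ Icc n₀ m, f n) atTop (𝓝 S) := by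
  obtain ⟨S, hS⟩ := summable_conditional_nat_iff.mp hf
  refine ⟨S - ∑ n ∈ range n₀, f n, ?_⟩
  refine ((hS.comp (tendsto_add_atTop_nat 1)).sub_const _).congr' ?_
  filter_upwards [eventually_ge_atTop n₀] with m hm
  rw [← Ico_add_one_right_eq_Icc, sum_Ico_eq_sub _ (by omega), Function.comp_apply]

end ConditionalSeries

theorem AntitoneOn.summable_conditional_alternating {a : ℕ → ℝ} {N : ℕ}
    (ha : AntitoneOn a (Set.Ici N)) (ha0 : Tendsto a atTop (𝓝 0)) :
    Summable (fun n ↦ (-1) ^ n * a n) (conditional ℕ) := by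
  have hanti : Antitone fun n ↦ a (max n N) := fun m n hmn ↦
    ha (le_max_right m N) (le_max_right n N) (max_le_max_right N hmn)
  have hlim : Tendsto (fun n ↦ a (max n N)) atTop (𝓝 0) :=
    ha0.comp (tendsto_atTop_mono (fun n ↦ le_max_left n N) tendsto_id)
  refine (summable_conditional_nat_iff.mpr
    (hanti.tendsto_alternating_series_of_tendsto_zero hlim)).conditional_congr_atTop ?_
  filter_upwards [eventually_ge_atTop N] with n hn
  rw [max_eq_left hn]

theorem abs_rpow_div_add_sub_rpow_sub_one_le {x q M β : ℝ} (hx : 0 < x) (hq : |q| ≤ M)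
    (hxM : 2 * M ≤ x) : |x ^ β / (x + q) - x ^ (β - 1)| ≤ 2 * M * x ^ (β - 2) := by
  have hxq : x / 2 ≤ x + q := by linarith [neg_abs_le q]
  have hxq0 : 0 < x + q := by linarith
  have hM : 0 ≤ M := (abs_nonneg q).trans hq
  have hxβ : 0 < x ^ β := Real.rpow_pos_of_pos hx β
  rw [Real.rpow_sub hx, Real.rpow_sub hx, Real.rpow_one, Real.rpow_two]
  have hdiff : x ^ β / (x + q) - x ^ β / x = -(x ^ β * q / ((x + q) * x)) := by
    field_simp
    ring
  rw [hdiff, abs_neg, abs_div, abs_of_pos (mul_pos hxq0 hx), abs_mul, abs_of_pos hxβ]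
  calc x ^ β * |q| / ((x + q) * x)
      ≤ x ^ β * M / (x / 2 * x) := by gcongr
    _ = 2 * M * (x ^ β / x ^ 2) := by field_simp

theorem alternating_rpow_perturbed_series_converges_general
    (β M : ℝ) (hβ1 : β < 1)
    (p : ℕ → ℝ) (hp : ∀ n : ℕ, |p n| ≤ M)
    (n₀ : ℕ) :
    ∃ S : ℝ, Tendsto
      (fun m => ∑ n ∈ Finset.Icc n₀ m, (-1 : ℝ) ^ n * (n : ℝ) ^ β / ((n : ℝ) + p n))
      atTop (nhds S) := by
  have hmain : Summable (fun n : ℕ ↦ (-1 : ℝ) ^ n * (n : ℝ) ^ (β - 1)) (conditional ℕ) := by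
    -- not antitone from `0`, as `(0 : ℝ) ^ (β - 1) = 0`
    refine AntitoneOn.summable_conditional_alternating (N := 1) ?_ ?_
    · exact fun m hm _ _ hmn ↦ Real.rpow_le_rpow_of_nonpos (by exact_mod_cast hm)
        (by exact_mod_cast hmn) (by linarith)
    · simpa [Function.comp_def] using
        (tendsto_rpow_neg_atTop (by linarith : 0 < 1 - β)).comp tendsto_natCast_atTop_atTop
  have herror : Summable fun n : ℕ ↦
      (-1 : ℝ) ^ n * (n : ℝ) ^ β / ((n : ℝ) + p n) - (-1 : ℝ) ^ n * (n : ℝ) ^ (β - 1) := by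
    refine Summable.of_norm_bounded_eventually_nat
      ((Real.summable_nat_rpow.mpr (by linarith : β - 2 < -1)).mul_left (2 * M)) ?_
    filter_upwards [eventually_gt_atTop 0, tendsto_natCast_atTop_atTop.eventually_ge_atTop (2 * M)]
      with n hn hnM
    rw [mul_div_assoc, ← mul_sub, norm_mul, norm_pow, norm_neg, norm_one, one_pow, one_mul]
    exact abs_rpow_div_add_sub_rpow_sub_one_le (by exact_mod_cast hn) (hp n) hnM
  simpa using (hmain.add (herror.mono_filter (conditional ℕ).le_atTop)).exists_tendsto_sum_Icc n₀

/-- For `0 ≤ β < 1` and `p` bounded by `M`, the series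
`∑_{n=n₀}^∞ (-1)^n · n^β / (n + p(n))` converges whenever `n₀ > M`. -/
theorem alternating_rpow_perturbed_series_converges
    (β M : ℝ) (hβ0 : 0 ≤ β) (hβ1 : β < 1) (hM : 0 < M)
    (p : ℕ → ℝ) (hp : ∀ n : ℕ, |p n| ≤ M)
    (n₀ : ℕ) (hn₀ : M < (n₀ : ℝ)) :
    ∃ S : ℝ, Tendsto
      (fun m => ∑ n ∈ Finset.Icc n₀ m, (-1 : ℝ) ^ n * (n : ℝ) ^ β / ((n : ℝ) + p n))
      atTop (nhds S) :=
  alternating_rpow_perturbed_series_converges_general β M hβ1 p hp n₀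
end

section
/- The series ∑_{n=1}^∞ (−1)^{n−1} / (n + 2·cos n) converges. -/
open Filter Finset Topology

/-!
Since `|2 cos n| ≤ 2`, the term `1 / (n + 2 cos n)` differs from `1 / n` by `O(1 / n²)`. The series
is therefore the alternating harmonic series, which converges by the alternating series test, plus an
absolutely convergent series.
-/

lemma abs_one_div_add_sub_one_div_le {x e : ℝ} (hx : 0 < x) (he : 2 * |e| ≤ x) :
    |1 / (x + e) - 1 / x| ≤ 2 * |e| / x ^ 2 := by
  have hxe : x ≤ 2 * (x + e) := by linarith [neg_abs_le e]
  have hpos : 0 < x + e := by linarith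
  rw [div_sub_div _ _ hpos.ne' hx.ne', abs_div, abs_of_pos (mul_pos hpos hx),
    div_le_div_iff₀ (mul_pos hpos hx) (by positivity)]
  calc |1 * x - (x + e) * 1| * x ^ 2 = |e| * x * x := by
        rw [show 1 * x - (x + e) * 1 = -e by ring, abs_neg]; ring
    _ ≤ |e| * x * (2 * (x + e)) := by gcongr
    _ = 2 * |e| * ((x + e) * x) := by ring

lemma summable_one_div_add_sub_one_div_of_abs_le {e : ℕ → ℝ} {C : ℝ} (he : ∀ n, |e n| ≤ C) :
    Summable fun n : ℕ => 1 / ((n + 1 : ℝ) + e n) - 1 / (n + 1) := by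
  have hsum : Summable fun n : ℕ => 2 * C / (n + 1 : ℝ) ^ 2 := by
    have := (summable_nat_add_iff 1).mpr (Real.summable_one_div_nat_pow.mpr one_lt_two)
    simpa [div_eq_mul_inv] using this.mul_left (2 * C)
  refine hsum.of_norm_bounded_eventually_nat ?_
  filter_upwards [tendsto_natCast_atTop_atTop.eventually_ge_atTop (2 * C)] with n hn
  calc ‖1 / ((n + 1 : ℝ) + e n) - 1 / (n + 1)‖ ≤ 2 * |e n| / (n + 1 : ℝ) ^ 2 :=
        abs_one_div_add_sub_one_div_le (by positivity) (by linarith [he n])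
    _ ≤ 2 * C / (n + 1 : ℝ) ^ 2 := by gcongr; exact he n

lemma exists_tendsto_sum_range_neg_one_pow_div_add_of_abs_le {e : ℕ → ℝ} {C : ℝ}
    (he : ∀ n, |e n| ≤ C) :
    ∃ S, Tendsto (fun m ↦ ∑ i ∈ range m, (-1 : ℝ) ^ i / ((i + 1 : ℝ) + e i)) atTop (𝓝 S) := by
  obtain ⟨L, hL⟩ := Antitone.tendsto_alternating_series_of_tendsto_zero
    (f := fun i : ℕ ↦ 1 / (i + 1 : ℝ)) (fun a b hab ↦ by dsimp only; gcongr)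
    tendsto_one_div_add_atTop_nhds_zero_nat
  have hdiff := (summable_one_div_add_sub_one_div_of_abs_le he).alternating.hasSum.tendsto_sum_nat
  refine ⟨_, (hL.add hdiff).congr fun m ↦ ?_⟩
  rw [← sum_add_distrib]
  refine sum_congr rfl fun i _ ↦ ?_
  ring

/-- The series `∑_{n=1}^∞ (-1)^(n-1) / (n + 2·cos n)` converges. -/
theorem alternating_cos_series_converges :
    ∃ S : ℝ, Tendsto
      (fun m : ℕ => ∑ n ∈ Finset.Icc 1 m, (-1 : ℝ) ^ (n - 1) / ((n : ℝ) + 2 * Real.cos n))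
      atTop (nhds S) := by
  have hcos (n : ℕ) : |2 * Real.cos (n + 1)| ≤ 2 := by
    simpa [abs_mul] using Real.abs_cos_le_one (n + 1)
  obtain ⟨S, hS⟩ := exists_tendsto_sum_range_neg_one_pow_div_add_of_abs_le hcos
  refine ⟨S, hS.congr fun m ↦ ?_⟩
  rw [← Ico_add_one_right_eq_Icc, sum_Ico_eq_sum_range]
  refine sum_congr rfl fun i _ ↦ ?_
  push_cast
  rw [add_comm 1 i, Nat.add_sub_cancel, add_comm (1 : ℝ)]
end

section
/- Let a_n = 1/(n + 2·cos n) for n ≥ 1 and let S = ∑_{n=1}^∞ (−1)^{n−1} a_n (which converges). Then for every m ≥ 1 the remainder satisfies |S − S_m| ≤ a_{m+1} + a_{m+3} + a_{m+5}, where S_m = ∑_{n=1}^m (−1)^{n−1} a_n. -/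
/-!
The terms `b k = a (k + 1)` are positive and satisfy `b (k + 5) ≤ b k`. For any nonnegative `b`
with `b (k + 2ω + 1) ≤ b k` (the paper's `ω` is `ω + 1` here), writing a partial sum of
`∑ (-1)^k b k` as `b 0 - b 1` plus a partial sum of the sequence shifted by two shows, by
induction, that all partial sums lie in `[-(b 1 + b 3 + ⋯ + b (2ω - 1)), b 0 + b 2 + ⋯ + b (2ω)]`;
so does their limit. Applied to the tail after `m` terms this gives
`|S - S_m| ≤ max (a (m+1) + a (m+3) + a (m+5)) (a (m+2) + a (m+4))`, and the first entry is the
larger one: for `m ≥ 7` because `1/(n+2) ≤ a n ≤ 1/(n-2)`, for `m ≤ 6` by locating `2, …, 11`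
relative to the multiples of `π/3` and `π/2`.
-/

open Filter Finset Topology Real

section Alternating

variable {b : ℕ → ℝ} {ω : ℕ}

theorem alternating_partial_sum_mem_Icc (hb : ∀ k, 0 ≤ b k)
    (hmono : ∀ k, b (k + (2 * ω + 1)) ≤ b k) (K : ℕ) :
    ∑ k ∈ range K, (-1) ^ k * b k ∈
      Set.Icc (-∑ i ∈ range ω, b (2 * i + 1)) (∑ i ∈ range (ω + 1), b (2 * i)) := by
  induction K using Nat.twoStepInduction generalizing b with
  | zero =>
    exact ⟨by simpa using sum_nonneg fun i _ ↦ hb (2 * i + 1),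
      by simpa using sum_nonneg fun i _ ↦ hb (2 * i)⟩
  | one =>
    have hodd := sum_nonneg fun i (_ : i ∈ range ω) ↦ hb (2 * i + 1)
    have heven := sum_nonneg fun i (_ : i ∈ range ω) ↦ hb (2 * (i + 1))
    rw [sum_range_succ']
    simp only [range_one, sum_singleton, pow_zero, one_mul, mul_zero, Set.mem_Icc]
    constructor <;> linarith [hb 0]
  | more K ih _ =>
    obtain ⟨hlo, hhi⟩ := ih (b := fun k ↦ b (k + 2)) (fun k ↦ hb _)
      (fun k ↦ by simpa only [add_right_comm] using hmono (k + 2))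
    have hsplit : ∑ k ∈ range (K + 2), (-1) ^ k * b k =
        b 0 - b 1 + ∑ k ∈ range K, (-1) ^ k * b (k + 2) := by
      simp [sum_range_succ', pow_succ]; ring
    have hodd : ∑ i ∈ range ω, b (2 * i + 1) + b (2 * ω + 1) =
        b 1 + ∑ i ∈ range ω, b (2 * i + 1 + 2) := by
      rw [← sum_range_succ (fun i ↦ b (2 * i + 1)), sum_range_succ']; ring_nf
    have heven : ∑ i ∈ range (ω + 1), b (2 * i) + b (2 * ω + 2) =
        b 0 + ∑ i ∈ range (ω + 1), b (2 * i + 2) := by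
      rw [sum_range_succ', sum_range_succ]; ring_nf
    have h0 : b (2 * ω + 1) ≤ b 0 := by simpa using hmono 0
    have h1 : b (2 * ω + 2) ≤ b 1 := by convert hmono 1 using 2; ring
    rw [hsplit, Set.mem_Icc]
    constructor <;> linarith

theorem abs_sub_alternating_partial_sum_le (hb : ∀ k, 0 ≤ b k)
    (hmono : ∀ k, b (k + (2 * ω + 1)) ≤ b k) {S : ℝ}
    (hS : Tendsto (fun n ↦ ∑ k ∈ range n, (-1) ^ k * b k) atTop (𝓝 S)) (m : ℕ) :
    |S - ∑ k ∈ range m, (-1) ^ k * b k| ≤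
      max (∑ i ∈ range (ω + 1), b (m + 2 * i)) (∑ i ∈ range ω, b (m + 2 * i + 1)) := by
  set R := S - ∑ k ∈ range m, (-1) ^ k * b k
  have htail : Tendsto (fun K ↦ ∑ k ∈ range K, (-1) ^ k * b (m + k)) atTop
      (𝓝 ((-1) ^ m * R)) := by
    refine (((hS.comp (tendsto_add_atTop_nat m)).sub_const _).const_mul _).congr fun K ↦ ?_
    simp only [Function.comp_apply, add_comm K m, sum_range_add, add_sub_cancel_left, mul_sum]
    refine sum_congr rfl fun k _ ↦ ?_
    rw [← mul_assoc, ← pow_add, ← add_assoc, ← two_mul, pow_add, pow_mul, neg_one_sq, one_pow,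
      one_mul]
  obtain ⟨hlo, hhi⟩ := isClosed_Icc.mem_of_tendsto htail <| .of_forall <|
    alternating_partial_sum_mem_Icc (b := fun k ↦ b (m + k)) (fun k ↦ hb _)
      (fun k ↦ by simpa only [add_assoc] using hmono (m + k))
  have hR : |R| = |(-1) ^ m * R| := by simp [abs_mul]
  rw [hR]
  exact abs_le.2 ⟨(neg_le_neg (le_max_right _ _)).trans hlo, hhi.trans (le_max_left _ _)⟩

end Alternating

lemma cos_two_le : cos 2 ≤ -3 / 8 := by
  have h := cos_two_mul (1 : ℝ)
  rw [mul_one] at h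
  nlinarith [cos_one_le, cos_one_pos]

lemma cos_natCast_le_neg_half {n : ℕ} (h3 : 3 ≤ n) (h4 : n ≤ 4) : cos n ≤ -1 / 2 := by
  have h3' : (3 : ℝ) ≤ n := by exact_mod_cast h3
  have h4' : (n : ℝ) ≤ 4 := by exact_mod_cast h4
  have h : cos (π / 3) ≤ cos (n - π) := by
    rw [← cos_abs (n - π)]
    exact cos_le_cos_of_nonneg_of_le_pi (abs_nonneg _) (by linarith [pi_pos])
      (abs_le.2 ⟨by linarith [pi_lt_d2], by linarith [pi_gt_three]⟩)
  rw [cos_pi_div_three, cos_sub_pi] at h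
  linarith

lemma cos_natCast_nonneg {n : ℕ} (h5 : 5 ≤ n) (h7 : n ≤ 7) : 0 ≤ cos n := by
  have h5' : (5 : ℝ) ≤ n := by exact_mod_cast h5
  have h7' : (n : ℝ) ≤ 7 := by exact_mod_cast h7
  rw [← cos_sub_two_pi]
  exact cos_nonneg_of_neg_pi_div_two_le_of_le (by linarith [pi_lt_d2]) (by linarith [pi_gt_three])

lemma cos_natCast_nonpos {n : ℕ} (h8 : 8 ≤ n) (h10 : n ≤ 10) : cos n ≤ 0 := by
  have h8' : (8 : ℝ) ≤ n := by exact_mod_cast h8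
  have h10' : (n : ℝ) ≤ 10 := by exact_mod_cast h10
  rw [← cos_sub_two_pi]
  exact cos_nonpos_of_pi_div_two_le_of_le (by linarith [pi_lt_d2]) (by linarith [pi_gt_three])

lemma natCast_add_two_mul_cos_pos (n : ℕ) : 0 < (n : ℝ) + 2 * cos n := by
  match n with
  | 0 => simp
  | 1 => norm_num; linarith [cos_one_pos]
  | 2 =>
    have h := cos_two_mul (1 : ℝ)
    rw [mul_one] at h
    norm_num
    nlinarith [cos_one_pos]
  | n + 3 => push_cast; linarith [neg_one_le_cos (n + 3 : ℝ), (n.cast_nonneg : (0 : ℝ) ≤ n)]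

noncomputable def cosTerm (n : ℕ) : ℝ := 1 / (n + 2 * cos n)

lemma cosTerm_pos (n : ℕ) : 0 < cosTerm n := one_div_pos.2 (natCast_add_two_mul_cos_pos n)

lemma cosTerm_le {n : ℕ} {c : ℝ} (hc : c ≤ cos n) (hpos : 0 < n + 2 * c) :
    cosTerm n ≤ 1 / (n + 2 * c) :=
  one_div_le_one_div_of_le hpos (by linarith)

lemma le_cosTerm {n : ℕ} {c : ℝ} (hc : cos n ≤ c) : 1 / (n + 2 * c) ≤ cosTerm n :=
  one_div_le_one_div_of_le (natCast_add_two_mul_cos_pos n) (by linarith)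

lemma cosTerm_add_five_le (n : ℕ) : cosTerm (n + 5) ≤ cosTerm n :=
  one_div_le_one_div_of_le (natCast_add_two_mul_cos_pos n) <| by
    push_cast; linarith [cos_le_one n, neg_one_le_cos (n + 5 : ℝ)]

lemma one_div_add_one_div_le {x : ℝ} (hx : 7 ≤ x) :
    1 / x + 1 / (x + 2) ≤ 1 / (x + 3) + 1 / (x + 5) + 1 / (x + 7) := by
  have hx0 : 0 < x := by linarith
  have e : 1 / (x + 3) + 1 / (x + 5) + 1 / (x + 7) - (1 / x + 1 / (x + 2)) =
      (x ^ 4 + 4 * x ^ 3 - 41 * x ^ 2 - 210 * x - 210) /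
        (x * (x + 2) * (x + 3) * (x + 5) * (x + 7)) := by
    field_simp
    ring
  rw [← sub_nonneg, e]
  refine div_nonneg ?_ (by positivity)
  nlinarith [mul_nonneg (sub_nonneg.2 hx)
    (by positivity : (0 : ℝ) ≤ x ^ 3 + 11 * x ^ 2 + 36 * x + 42)]

lemma cosTerm_even_shifts_le_odd_shifts_of_seven_le {m : ℕ} (hm : 7 ≤ m) :
    cosTerm (m + 2) + cosTerm (m + 4) ≤ cosTerm (m + 1) + cosTerm (m + 3) + cosTerm (m + 5) := by
  have hx : (7 : ℝ) ≤ m := by exact_mod_cast hm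
  have u2 := cosTerm_le (n := m + 2) (neg_one_le_cos _) (by push_cast; linarith)
  have u4 := cosTerm_le (n := m + 4) (neg_one_le_cos _) (by push_cast; linarith)
  have l1 := le_cosTerm (n := m + 1) (cos_le_one _)
  have l3 := le_cosTerm (n := m + 3) (cos_le_one _)
  have l5 := le_cosTerm (n := m + 5) (cos_le_one _)
  have key := one_div_add_one_div_le hx
  push_cast at u2 u4 l1 l3 l5
  ring_nf at u2 u4 l1 l3 l5 key ⊢
  linarith

lemma cosTerm_even_shifts_le_odd_shifts_of_le_six {m : ℕ} (hm : 1 ≤ m) (hm6 : m ≤ 6) :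
    cosTerm (m + 2) + cosTerm (m + 4) ≤ cosTerm (m + 1) + cosTerm (m + 3) + cosTerm (m + 5) := by
  have u3 := cosTerm_le (n := 3) (neg_one_le_cos _) (by norm_num)
  have u4 := cosTerm_le (n := 4) (neg_one_le_cos _) (by norm_num)
  have u5 := cosTerm_le (n := 5) (cos_natCast_nonneg le_rfl (by norm_num)) (by norm_num)
  have u6 := cosTerm_le (n := 6) (cos_natCast_nonneg (by norm_num) (by norm_num)) (by norm_num)
  have u7 := cosTerm_le (n := 7) (cos_natCast_nonneg (by norm_num) le_rfl) (by norm_num)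
  have u8 := cosTerm_le (n := 8) (neg_one_le_cos _) (by norm_num)
  have u9 := cosTerm_le (n := 9) (neg_one_le_cos _) (by norm_num)
  have u10 := cosTerm_le (n := 10) (neg_one_le_cos _) (by norm_num)
  have l2 := le_cosTerm (n := 2) (c := -3 / 8) (by simpa using cos_two_le)
  have l3 := le_cosTerm (n := 3) (cos_natCast_le_neg_half le_rfl (by norm_num))
  have l4 := le_cosTerm (n := 4) (cos_natCast_le_neg_half (by norm_num) le_rfl)
  have l5 := le_cosTerm (n := 5) (cos_le_one _)
  have l6 := le_cosTerm (n := 6) (cos_le_one _)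
  have l7 := le_cosTerm (n := 7) (cos_le_one _)
  have l8 := le_cosTerm (n := 8) (cos_natCast_nonpos le_rfl (by norm_num))
  have l9 := le_cosTerm (n := 9) (cos_natCast_nonpos (by norm_num) (by norm_num))
  have l10 := le_cosTerm (n := 10) (cos_natCast_nonpos (by norm_num) le_rfl)
  have l11 := le_cosTerm (n := 11) (cos_le_one _)
  norm_num at *
  interval_cases m <;> norm_num <;> linarith

lemma cosTerm_even_shifts_le_odd_shifts {m : ℕ} (hm : 1 ≤ m) :
    cosTerm (m + 2) + cosTerm (m + 4) ≤ cosTerm (m + 1) + cosTerm (m + 3) + cosTerm (m + 5) := by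
  rcases le_or_gt m 6 with h | h
  · exact cosTerm_even_shifts_le_odd_shifts_of_le_six hm h
  · exact cosTerm_even_shifts_le_odd_shifts_of_seven_le h

/-- Remainder estimate for `∑ (-1)^(n-1)/(n + 2·cos n)`:
`|S - S_m| ≤ a_{m+1} + a_{m+3} + a_{m+5}`. -/
theorem cos_series_remainder_bound
    (a : ℕ → ℝ) (ha : ∀ n : ℕ, a n = 1 / ((n : ℝ) + 2 * Real.cos n))
    (S : ℝ)
    (hS : Tendsto (fun m => ∑ n ∈ Finset.Icc 1 m, (-1 : ℝ) ^ (n - 1) * a n)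
      atTop (nhds S)) :
    ∀ m : ℕ, 1 ≤ m →
      |S - ∑ n ∈ Finset.Icc 1 m, (-1 : ℝ) ^ (n - 1) * a n| ≤
        a (m + 1) + a (m + 3) + a (m + 5) := by
  intro m hm
  obtain rfl : a = cosTerm := funext ha
  have hsum (n : ℕ) : ∑ k ∈ Icc 1 n, (-1 : ℝ) ^ (k - 1) * cosTerm k =
      ∑ k ∈ range n, (-1) ^ k * cosTerm (k + 1) := by
    rw [← Ico_add_one_right_eq_Icc, sum_Ico_eq_sum_range]
    simp [add_comm]
  simp only [hsum] at hS ⊢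
  have h := abs_sub_alternating_partial_sum_le (ω := 2) (fun k ↦ (cosTerm_pos (k + 1)).le)
    (fun k ↦ cosTerm_add_five_le (k + 1)) hS m
  simp only [sum_range_succ, sum_range_zero, zero_add, mul_zero, mul_one, add_assoc,
    Nat.reduceMul, Nat.reduceAdd] at h
  rw [max_eq_left (by linarith [cosTerm_even_shifts_le_odd_shifts hm])] at h
  linarith
end

section
/- Let (a_n) be a real sequence and n₀ a natural number such that for all n ≥ n₀: a_{n+1} ≤ a_n, a_n → 0 as n → ∞, and 2·a_{n+1} ≤ a_n + a_{n+2} (discrete convexity). Let S = ∑_{n=n₀}^∞ (−1)^n a_n. Then for every m ≥ n₀ the remainder satisfies (1/2)·a_{m+1} ≤ |S − S_m| ≤ a_{m+1}, where S_m = ∑_{n=n₀}^m (−1)^n a_n. -/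
/-!
Write `R = (-1)^(m+1) (S - S_m) = a_{m+1} - a_{m+2} + a_{m+3} - ⋯`. Leibniz's bounds for the
antitone sequence `a` give `0 ≤ R ≤ a_{m+1}`. For the lower bound, adding the series for `R` to
itself shifted by one term gives `2R = a_{m+1} + ∑ (-1)^k (a_{m+1+k} - a_{m+2+k})`, and convexity
makes the differences `a_n - a_{n+1}` antitone, so Leibniz's bound shows the last sum is `≥ 0`.
-/

open Filter Finset Topology

theorem sum_range_alternating_sub_succ {E : Type*} [Ring E] (f : ℕ → E) (n : ℕ) :
    ∑ i ∈ range n, (-1) ^ i * (f i - f (i + 1)) =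
      ∑ i ∈ range n, (-1) ^ i * f i + ∑ i ∈ range (n + 1), (-1) ^ i * f i - f 0 := by
  rw [sum_range_succ']
  simp only [mul_sub, sum_sub_distrib, pow_succ, mul_neg, mul_one, neg_mul, sum_neg_distrib,
    pow_zero, one_mul]
  abel

section AlternatingSeries

variable {E : Type*} [Ring E] [PartialOrder E] [IsOrderedRing E]
  [TopologicalSpace E] [OrderClosedTopology E] {l : E} {f : ℕ → E}

theorem Antitone.nonneg_of_tendsto_alternating_series
    (hfl : Tendsto (fun n ↦ ∑ i ∈ range n, (-1) ^ i * f i) atTop (𝓝 l))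
    (hfa : Antitone f) : 0 ≤ l := by
  simpa using hfa.alternating_series_le_tendsto hfl 0

theorem Antitone.tendsto_alternating_series_le_head
    (hfl : Tendsto (fun n ↦ ∑ i ∈ range n, (-1) ^ i * f i) atTop (𝓝 l))
    (hfa : Antitone f) : l ≤ f 0 := by
  simpa using hfa.tendsto_le_alternating_series hfl 0

theorem head_le_two_mul_of_tendsto_alternating_series [IsTopologicalAddGroup E]
    (hfl : Tendsto (fun n ↦ ∑ i ∈ range n, (-1) ^ i * f i) atTop (𝓝 l))
    (hdiff : Antitone fun i ↦ f i - f (i + 1)) : f 0 ≤ 2 * l := by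
  have hdiffl : Tendsto (fun n ↦ ∑ i ∈ range n, (-1) ^ i * (f i - f (i + 1))) atTop
      (𝓝 (l + l - f 0)) := by
    simp_rw [sum_range_alternating_sub_succ]
    exact (hfl.add (hfl.comp (tendsto_add_atTop_nat 1))).sub_const _
  rw [two_mul]
  exact sub_nonneg.mp (hdiff.nonneg_of_tendsto_alternating_series hdiffl)

end AlternatingSeries

theorem sum_Icc_add_sub_sum_Icc {M : Type*} [AddCommGroup M] (g : ℕ → M) {n₀ m : ℕ}
    (hm : n₀ ≤ m + 1) (N : ℕ) :
    ∑ n ∈ Icc n₀ (m + N), g n - ∑ n ∈ Icc n₀ m, g n = ∑ k ∈ range N, g (m + 1 + k) := by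
  induction N with
  | zero => simp
  | succ N ih =>
    rw [← add_assoc, sum_Icc_succ_top (by omega), sum_range_succ, ← ih]
    abel_nf

theorem tendsto_alternating_tail {a : ℕ → ℝ} {n₀ m : ℕ} (hm : n₀ ≤ m + 1) {S : ℝ}
    (hS : Tendsto (fun N ↦ ∑ n ∈ Icc n₀ N, (-1 : ℝ) ^ n * a n) atTop (𝓝 S)) :
    Tendsto (fun N ↦ ∑ k ∈ range N, (-1) ^ k * a (m + 1 + k)) atTop
      (𝓝 ((-1) ^ (m + 1) * (S - ∑ n ∈ Icc n₀ m, (-1 : ℝ) ^ n * a n))) := by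
  have htail := ((hS.comp (tendsto_add_atTop_nat m)).sub_const
    (∑ n ∈ Icc n₀ m, (-1 : ℝ) ^ n * a n)).const_mul ((-1 : ℝ) ^ (m + 1))
  refine htail.congr fun N ↦ ?_
  rw [Function.comp_apply, add_comm N m, sum_Icc_add_sub_sum_Icc _ hm, mul_sum]
  refine sum_congr rfl fun k _ ↦ ?_
  rw [pow_add _ (m + 1) k, ← mul_assoc, ← mul_assoc, ← pow_add, Even.neg_one_pow ⟨_, rfl⟩,
    one_mul]

theorem leibniz_remainder_convex_two_sided_general
    (a : ℕ → ℝ) (n₀ : ℕ)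
    (hmono : ∀ n : ℕ, n₀ ≤ n → a (n + 1) ≤ a n)
    (hconvex : ∀ n : ℕ, n₀ ≤ n → 2 * a (n + 1) ≤ a n + a (n + 2))
    (S : ℝ)
    (hS : Tendsto (fun m => ∑ n ∈ Finset.Icc n₀ m, (-1 : ℝ) ^ n * a n)
      atTop (nhds S)) :
    ∀ m : ℕ, n₀ ≤ m →
      (1 / 2) * a (m + 1) ≤ |S - ∑ n ∈ Finset.Icc n₀ m, (-1 : ℝ) ^ n * a n| ∧
      |S - ∑ n ∈ Finset.Icc n₀ m, (-1 : ℝ) ^ n * a n| ≤ a (m + 1) := by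
  intro m hm
  have hfl := tendsto_alternating_tail (hm.trans m.le_succ) hS
  have hanti : Antitone fun k ↦ a (m + 1 + k) :=
    antitone_nat_of_succ_le fun k ↦ hmono (m + 1 + k) (by omega)
  have hdiff : Antitone fun k ↦ a (m + 1 + k) - a (m + 1 + (k + 1)) :=
    antitone_nat_of_succ_le fun k ↦ by
      have h := hconvex (m + 1 + k) (by omega)
      ring_nf at h ⊢
      linarith
  have habs : |S - ∑ n ∈ Icc n₀ m, (-1 : ℝ) ^ n * a n| =
      (-1) ^ (m + 1) * (S - ∑ n ∈ Icc n₀ m, (-1 : ℝ) ^ n * a n) := by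
    rw [← abs_of_nonneg (hanti.nonneg_of_tendsto_alternating_series hfl), abs_mul,
      abs_neg_one_pow, one_mul]
  have hlow := head_le_two_mul_of_tendsto_alternating_series hfl hdiff
  have hup := hanti.tendsto_alternating_series_le_head hfl
  simp only [add_zero] at hlow hup
  rw [habs]
  constructor <;> linarith

/-- For a monotonically decreasing convex null sequence, the remainder of the
alternating series is between half the first omitted term and the first
omitted term: `(1/2)·a_{m+1} ≤ |S - S_m| ≤ a_{m+1}`. -/
theorem leibniz_remainder_convex_two_sided
    (a : ℕ → ℝ) (n₀ : ℕ)
    (hmono : ∀ n : ℕ, n₀ ≤ n → a (n + 1) ≤ a n)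
    (hlim : Tendsto a atTop (nhds 0))
    (hconvex : ∀ n : ℕ, n₀ ≤ n → 2 * a (n + 1) ≤ a n + a (n + 2))
    (S : ℝ)
    (hS : Tendsto (fun m => ∑ n ∈ Finset.Icc n₀ m, (-1 : ℝ) ^ n * a n)
      atTop (nhds S)) :
    ∀ m : ℕ, n₀ ≤ m →
      (1 / 2) * a (m + 1) ≤ |S - ∑ n ∈ Finset.Icc n₀ m, (-1 : ℝ) ^ n * a n| ∧
      |S - ∑ n ∈ Finset.Icc n₀ m, (-1 : ℝ) ^ n * a n| ≤ a (m + 1) :=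
  leibniz_remainder_convex_two_sided_general a n₀ hmono hconvex S hS
end

section
/- For every natural number m ≥ 2, the remainder of the alternating harmonic series satisfies (1/2)·ln(1 + 1/(m+1)) < |∑_{n=m+1}^∞ (−1)^{n+1}/n| < (1/2)·ln(1 + 1/(m−1)). In particular |∑_{n=m+1}^∞ (−1)^{n+1}/n| ~ 1/(2m) as m → ∞. -/
/-!
Pairing consecutive terms, `(-1)^m` times the remainder `R m` after `m` terms is the series of
positive terms `1 / ((m + 2k + 1) (m + 2k + 2))`, each strictly decreasing in `m`. Hence `|R m|` is
strictly decreasing, and since `|R m| + |R (m + 1)| = 1 / (m + 1)` this traps it: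
`1 / (2 (m + 1)) < |R m| < 1 / (2 m)`. The logarithmic bounds follow from
`x / (1 + x) < log (1 + x) < x`, and the asymptotics by squeezing.
-/

open Filter Finset Topology

section Tails

variable {E : Type*} [AddCommMonoid E]

lemma sum_range_pairs_eq_sum_Ioc (a : ℕ → E) (m K : ℕ) :
    ∑ k ∈ range K, (a (m + 2 * k + 1) + a (m + 2 * k + 2)) = ∑ n ∈ Ioc m (m + 2 * K), a n := by
  induction K with
  | zero => simp
  | succ K ih =>
    rw [sum_range_succ, ih, show m + 2 * (K + 1) = m + 2 * K + 1 + 1 from rfl,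
      sum_Ioc_succ_top (by omega), sum_Ioc_succ_top (by omega)]
    exact (add_assoc _ _ _).symm

variable [TopologicalSpace E] {a : ℕ → E}

lemma Filter.Tendsto.sum_range_pairs {m : ℕ} {s : E}
    (h : Tendsto (fun N ↦ ∑ n ∈ Icc (m + 1) N, a n) atTop (𝓝 s)) :
    Tendsto (fun K ↦ ∑ k ∈ range K, (a (m + 2 * k + 1) + a (m + 2 * k + 2))) atTop (𝓝 s) := by
  simp_rw [sum_range_pairs_eq_sum_Ioc, ← Icc_add_one_left_eq_Ioc]
  exact h.comp (tendsto_atTop_mono (fun K ↦ by dsimp; omega) tendsto_id)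

lemma tail_eq_add_tail [ContinuousAdd E] [T2Space E] {R : ℕ → E}
    (hR : ∀ m, Tendsto (fun N ↦ ∑ n ∈ Icc (m + 1) N, a n) atTop (𝓝 (R m))) (m : ℕ) :
    R m = a (m + 1) + R (m + 1) := by
  refine tendsto_nhds_unique (hR m) (((hR (m + 1)).const_add (a (m + 1))).congr' ?_)
  filter_upwards [eventually_ge_atTop (m + 1)] with N hN
  rw [Icc_add_one_left_eq_Ioc (m + 1), add_sum_Ioc_eq_sum_Icc hN]

end Tails

noncomputable def altHarmonicPair (m k : ℕ) : ℝ := 1 / ((m + 2 * k + 1) * (m + 2 * k + 2))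

lemma altHarmonicPair_pos (m k : ℕ) : 0 < altHarmonicPair m k := by
  unfold altHarmonicPair; positivity

lemma altHarmonicPair_succ_lt (m k : ℕ) : altHarmonicPair (m + 1) k < altHarmonicPair m k := by
  unfold altHarmonicPair
  push_cast
  gcongr <;> linarith

lemma neg_one_pow_mul_pair_eq_altHarmonicPair (m k : ℕ) :
    (-1 : ℝ) ^ m * ((-1) ^ (m + 2 * k + 1 + 1) / ((m + 2 * k + 1 : ℕ) : ℝ) +
      (-1) ^ (m + 2 * k + 2 + 1) / ((m + 2 * k + 2 : ℕ) : ℝ)) = altHarmonicPair m k := by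
  have hsq : (-1 : ℝ) ^ m * (-1) ^ m = 1 := by rw [← mul_pow]; norm_num
  rw [show m + 2 * k + 2 + 1 = m + 2 * (k + 1) + 1 by ring,
    show m + 2 * k + 1 + 1 = m + 2 * (k + 1) by ring, pow_succ, pow_add, pow_mul, neg_one_sq,
    one_pow, mul_one, altHarmonicPair]
  push_cast
  field_simp
  linear_combination ((m : ℝ) + 2 * k + 2) * hsq

lemma strictAnti_of_hasSum_altHarmonicPair {B : ℕ → ℝ}
    (hB : ∀ m, HasSum (altHarmonicPair m) (B m)) : StrictAnti B :=
  strictAnti_nat_of_succ_lt fun m ↦ hasSum_lt (fun k ↦ (altHarmonicPair_succ_lt m k).le)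
    (altHarmonicPair_succ_lt m 0) (hB (m + 1)) (hB m)

section AlternatingHarmonicTail

variable {R : ℕ → ℝ}
  (hR : ∀ m, Tendsto (fun N : ℕ ↦ ∑ n ∈ Icc (m + 1) N, (-1 : ℝ) ^ (n + 1) / (n : ℝ)) atTop
    (𝓝 (R m)))
include hR

lemma hasSum_altHarmonicPair (m : ℕ) : HasSum (altHarmonicPair m) ((-1) ^ m * R m) := by
  refine (hasSum_iff_tendsto_nat_of_nonneg (fun k ↦ (altHarmonicPair_pos m k).le) _).2 ?_
  convert ((hR m).sum_range_pairs).const_mul ((-1) ^ m) using 2 with K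
  rw [mul_sum]
  exact sum_congr rfl fun k _ ↦ (neg_one_pow_mul_pair_eq_altHarmonicPair m k).symm

lemma abs_altHarmonic_tail (m : ℕ) : |R m| = (-1) ^ m * R m := by
  have hpos : 0 < (-1) ^ m * R m := (altHarmonicPair_pos m 0).trans_le
    (le_hasSum (hasSum_altHarmonicPair hR m) 0 fun k _ ↦ (altHarmonicPair_pos m k).le)
  rw [← abs_of_pos hpos, abs_mul, abs_neg_one_pow, one_mul]

lemma strictAnti_abs_altHarmonic_tail : StrictAnti fun m ↦ |R m| :=
  strictAnti_of_hasSum_altHarmonicPair fun m ↦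
    abs_altHarmonic_tail hR m ▸ hasSum_altHarmonicPair hR m

lemma abs_altHarmonic_tail_add_succ (m : ℕ) : |R m| + |R (m + 1)| = 1 / ((m : ℝ) + 1) := by
  have hsq : (-1 : ℝ) ^ m * (-1) ^ m = 1 := by rw [← mul_pow]; norm_num
  rw [abs_altHarmonic_tail hR, abs_altHarmonic_tail hR, tail_eq_add_tail hR m, pow_succ, pow_succ]
  push_cast
  field_simp
  linear_combination hsq

lemma lt_abs_altHarmonic_tail (m : ℕ) : 1 / (2 * ((m : ℝ) + 1)) < |R m| := by
  have hsum := abs_altHarmonic_tail_add_succ hR m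
  have hdecr := strictAnti_abs_altHarmonic_tail hR m.lt_succ_self
  rw [show 1 / (2 * ((m : ℝ) + 1)) = 1 / ((m : ℝ) + 1) / 2 by rw [div_div, mul_comm]]
  linarith

lemma abs_altHarmonic_tail_lt {m : ℕ} (hm : 0 < m) : |R m| < 1 / (2 * (m : ℝ)) := by
  obtain ⟨p, rfl⟩ : ∃ p, m = p + 1 := ⟨m - 1, by omega⟩
  have hsum := abs_altHarmonic_tail_add_succ hR p
  have hdecr := strictAnti_abs_altHarmonic_tail hR p.lt_succ_self
  rw [show 1 / (2 * ((p + 1 : ℕ) : ℝ)) = 1 / ((p : ℝ) + 1) / 2 by push_cast; rw [div_div, mul_comm]]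
  linarith

end AlternatingHarmonicTail

namespace Real

lemma log_one_add_lt_self {x : ℝ} (hx : 0 < x) : log (1 + x) < x := by
  have := log_lt_sub_one_of_pos (by linarith : 0 < 1 + x) (by linarith : 1 + x ≠ 1)
  linarith

lemma div_one_add_lt_log_one_add {x : ℝ} (hx : 0 < x) : x / (1 + x) < log (1 + x) :=
  calc x / (1 + x) < 2 * x / (x + 2) := by
        rw [div_lt_div_iff₀ (by positivity) (by positivity)]; nlinarith
    _ < log (1 + x) := lt_log_one_add_of_pos hx

end Real

/-- The remainder `R m = ∑_{n=m+1}^∞ (-1)^(n+1)/n` of the alternating harmonic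
series satisfies `(1/2)·ln(1 + 1/(m+1)) < |R m| < (1/2)·ln(1 + 1/(m-1))` for
`m ≥ 2`, and `|R m| ~ 1/(2m)` as `m → ∞`. -/
theorem alternating_harmonic_remainder_estimates
    (R : ℕ → ℝ)
    (hR : ∀ m : ℕ, Tendsto
      (fun N : ℕ => ∑ n ∈ Finset.Icc (m + 1) N, (-1 : ℝ) ^ (n + 1) / (n : ℝ))
      atTop (nhds (R m))) :
    (∀ m : ℕ, 2 ≤ m →
      (1 / 2) * Real.log (1 + 1 / ((m : ℝ) + 1)) < |R m| ∧
      |R m| < (1 / 2) * Real.log (1 + 1 / ((m : ℝ) - 1))) ∧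
    Tendsto (fun m : ℕ => |R m| / (1 / (2 * (m : ℝ)))) atTop (nhds 1) := by
  refine ⟨fun m hm ↦ ⟨?_, ?_⟩, ?_⟩
  · calc (1 / 2) * Real.log (1 + 1 / ((m : ℝ) + 1))
        < (1 / 2) * (1 / ((m : ℝ) + 1)) := by gcongr; exact Real.log_one_add_lt_self (by positivity)
      _ = 1 / (2 * ((m : ℝ) + 1)) := by rw [one_div_mul_one_div]
      _ < |R m| := lt_abs_altHarmonic_tail hR m
  · have hm1 : (0 : ℝ) < m - 1 := by
      have : (2 : ℝ) ≤ m := by exact_mod_cast hm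
      linarith
    calc |R m| < 1 / (2 * (m : ℝ)) := abs_altHarmonic_tail_lt hR (by omega)
      _ = (1 / 2) * (1 / ((m : ℝ) - 1) / (1 + 1 / ((m : ℝ) - 1))) := by field_simp; ring
      _ < (1 / 2) * Real.log (1 + 1 / ((m : ℝ) - 1)) := by
        gcongr; exact Real.div_one_add_lt_log_one_add (by positivity)
  · refine tendsto_of_tendsto_of_tendsto_of_le_of_le' (tendsto_natCast_div_add_atTop 1)
      tendsto_const_nhds ?_ ?_ <;> filter_upwards [eventually_gt_atTop 0] with m hm <;>
      rw [div_div_eq_mul_div, div_one]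
    · calc (m : ℝ) / (m + 1) = 1 / (2 * ((m : ℝ) + 1)) * (2 * m) := by field_simp
        _ ≤ |R m| * (2 * m) := by gcongr; exact (lt_abs_altHarmonic_tail hR m).le
    · calc |R m| * (2 * m) ≤ 1 / (2 * (m : ℝ)) * (2 * m) := by
            gcongr; exact (abs_altHarmonic_tail_lt hR hm).le
        _ = 1 := by field_simp
end

section
/- Define the real sequence (a_n)_{n≥1} by: a_{6k−5} = 1/k + 1/2^k, a_{6k−4} = 1/10^k, a_{6k−3} = 1/k + 1/2^k, a_{6k−2} = 1/k, a_{6k−1} = 1/10^k, a_{6k} = 1/k, for k ≥ 1. Then (a_n) is Z(3)-monotonously decreasing (a_{n+3} ≤ a_n for all n ≥ 1), a_n → 0, the series ∑_{n=1}^∞ (−1)^{n+1} a_n converges with sum S = 2, and the partial sums satisfy S_{6k} = 2(1 − 1/2^k), so that the remainder satisfies R_{6k} = S − S_{6k} = 1/2^{k−1}. -/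
/-!
Block `k` contributes
`(1/k + 1/2^k - 1/10^k) + (1/k + 1/2^k - 1/k) + (1/10^k - 1/k) = 1/2^(k-1)`
to the alternating sum, whence `S_{6k} = 2(1 - 1/2^k)`. Inside a block `Z(3)`-monotonicity is
immediate; across two blocks it reduces to `1/(k+1) + 1/2^(k+1) ≤ 1/k`, i.e. `k(k+1) ≤ 2^(k+1)`.
Since `a_n → 0`, consecutive partial sums differ by a null sequence, so `S_{6k} → 2` forces
`S_m → 2`.
-/

open Filter Topology

theorem Filter.Tendsto.of_comp_mul_add {α : Type*} {f : ℕ → α} {l : Filter α} {p : ℕ}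
    (hp : 0 < p) (h : ∀ r < p, Tendsto (fun k => f (p * k + r)) atTop l) : Tendsto f atTop l := by
  intro s hs
  have hclasses : ∀ᶠ k in atTop, ∀ r : Fin p, f (p * k + r) ∈ s :=
    eventually_all.2 fun r => h r r.2 hs
  exact ((Nat.tendsto_div_const_atTop hp.ne').eventually hclasses).mono fun n hn => by
    simpa only [Nat.div_add_mod] using hn ⟨n % p, Nat.mod_lt n hp⟩

theorem Filter.Tendsto.of_comp_mul_of_sub {E : Type*} [AddCommGroup E] [TopologicalSpace E]
    [IsTopologicalAddGroup E] {S : ℕ → E} {L : E} {p : ℕ} (hp : 0 < p)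
    (hS : Tendsto (fun k => S (p * k)) atTop (𝓝 L))
    (hd : Tendsto (fun n => S (n + 1) - S n) atTop (𝓝 0)) : Tendsto S atTop (𝓝 L) := by
  refine Tendsto.of_comp_mul_add hp fun r _ => ?_
  have htelescope (k : ℕ) :
      S (p * k) + ∑ i ∈ Finset.range r, (S (p * k + i + 1) - S (p * k + i)) =
        S (p * k + r) := by
    have h := Finset.sum_range_sub (fun i => S (p * k + i)) r
    simp only [← add_assoc, add_zero] at h
    rw [h, add_sub_cancel]
  have hshift : ∀ i, Tendsto (fun k => p * k + i) atTop atTop := fun i =>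
    tendsto_atTop_mono (fun k => (Nat.le_mul_of_pos_left k hp).trans (Nat.le_add_right _ i))
      tendsto_id
  have h := hS.add (tendsto_finsetSum (Finset.range r) fun i _ => hd.comp (hshift i))
  rw [Finset.sum_const_zero, add_zero] at h
  exact h.congr htelescope

theorem tendsto_one_div_pow_atTop_nhds_zero {x : ℝ} (hx : 1 < x) :
    Tendsto (fun k : ℕ => 1 / x ^ k) atTop (𝓝 0) := by
  simpa only [one_div_pow] using
    tendsto_pow_atTop_nhds_zero_of_lt_one (by positivity) ((div_lt_one (by positivity)).2 hx)

theorem Nat.mul_succ_le_two_pow_succ (k : ℕ) : k * (k + 1) ≤ 2 ^ (k + 1) := by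
  induction k with
  | zero => simp
  | succ k ih =>
    have := Nat.lt_two_pow_self (n := k)
    rw [pow_succ] at ih
    rw [pow_succ, pow_succ]
    nlinarith

def altSum (a : ℕ → ℝ) (m : ℕ) : ℝ := ∑ n ∈ Finset.Icc 1 m, (-1 : ℝ) ^ (n + 1) * a n

section altSum

variable {a : ℕ → ℝ}

theorem altSum_succ (m : ℕ) : altSum a (m + 1) = altSum a m + (-1) ^ (m + 2) * a (m + 1) :=
  Finset.sum_Icc_succ_top (by omega) _

theorem altSum_add_two {m : ℕ} (hm : Even m) :
    altSum a (m + 2) = altSum a m + (a (m + 1) - a (m + 2)) := by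
  rw [altSum_succ, altSum_succ]
  simp only [pow_add, hm.neg_one_pow]
  ring

theorem tendsto_altSum_succ_sub (ha : Tendsto a atTop (𝓝 0)) :
    Tendsto (fun m => altSum a (m + 1) - altSum a m) atTop (𝓝 0) := by
  simp only [altSum_succ, add_sub_cancel_left]
  rw [tendsto_zero_iff_norm_tendsto_zero]
  simpa using (ha.comp (tendsto_add_atTop_nat 1)).abs

end altSum

theorem apply_mul_add_of_apply_mul_sub {α : Type*} {a f : ℕ → α} {p r : ℕ} (hr : r ≤ p)
    (h : ∀ k, 1 ≤ k → a (p * k - r) = f k) (k : ℕ) : a (p * k + (p - r)) = f (k + 1) := by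
  rw [← h (k + 1) k.succ_pos, mul_add_one]
  congr 1
  omega

theorem one_div_add_one_add_one_div_two_pow_le {k : ℕ} (hk : 0 < k) :
    1 / ((k : ℝ) + 1) + 1 / 2 ^ (k + 1) ≤ 1 / k := by
  have hpow : (k : ℝ) * (k + 1) ≤ 2 ^ (k + 1) := by
    exact_mod_cast Nat.mul_succ_le_two_pow_succ k
  have hk' : (0 : ℝ) < k := by exact_mod_cast hk
  calc 1 / ((k : ℝ) + 1) + 1 / 2 ^ (k + 1)
      ≤ 1 / (k + 1) + 1 / (k * (k + 1)) := by gcongr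
    _ = 1 / k := by field_simp

/-- Block `k` (the paper's block `k + 1`) occupies the indices `6k+1, …, 6k+6`. -/
structure Z3Example (a : ℕ → ℝ) : Prop where
  add_one : ∀ k : ℕ, a (6 * k + 1) = 1 / ((k : ℝ) + 1) + 1 / 2 ^ (k + 1)
  add_two : ∀ k : ℕ, a (6 * k + 2) = 1 / 10 ^ (k + 1)
  add_three : ∀ k : ℕ, a (6 * k + 3) = 1 / ((k : ℝ) + 1) + 1 / 2 ^ (k + 1)
  add_four : ∀ k : ℕ, a (6 * k + 4) = 1 / ((k : ℝ) + 1)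
  add_five : ∀ k : ℕ, a (6 * k + 5) = 1 / 10 ^ (k + 1)
  add_six : ∀ k : ℕ, a (6 * k + 6) = 1 / ((k : ℝ) + 1)

namespace Z3Example

variable {a : ℕ → ℝ}

theorem of_blocks
    (h1 : ∀ k : ℕ, 1 ≤ k → a (6 * k - 5) = 1 / (k : ℝ) + 1 / 2 ^ k)
    (h2 : ∀ k : ℕ, 1 ≤ k → a (6 * k - 4) = 1 / 10 ^ k)
    (h3 : ∀ k : ℕ, 1 ≤ k → a (6 * k - 3) = 1 / (k : ℝ) + 1 / 2 ^ k)
    (h4 : ∀ k : ℕ, 1 ≤ k → a (6 * k - 2) = 1 / (k : ℝ))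
    (h5 : ∀ k : ℕ, 1 ≤ k → a (6 * k - 1) = 1 / 10 ^ k)
    (h6 : ∀ k : ℕ, 1 ≤ k → a (6 * k) = 1 / (k : ℝ)) : Z3Example a where
  add_one k := by exact_mod_cast apply_mul_add_of_apply_mul_sub (by norm_num) h1 k
  add_two := apply_mul_add_of_apply_mul_sub (by norm_num) h2
  add_three k := by exact_mod_cast apply_mul_add_of_apply_mul_sub (by norm_num) h3 k
  add_four k := by exact_mod_cast apply_mul_add_of_apply_mul_sub (by norm_num) h4 k
  add_five := apply_mul_add_of_apply_mul_sub (by norm_num) h5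
  add_six k := by
    exact_mod_cast apply_mul_add_of_apply_mul_sub (r := 0) (by norm_num) h6 k

theorem apply_add_three_le (ha : Z3Example a) {n : ℕ} (hn : 1 ≤ n) : a (n + 3) ≤ a n := by
  obtain ⟨k, r, hr, rfl⟩ : ∃ k r, r < 6 ∧ n = 6 * k + r + 1 :=
    ⟨(n - 1) / 6, (n - 1) % 6, Nat.mod_lt _ (by norm_num), by omega⟩
  interval_cases r
  · show a (6 * k + 4) ≤ a (6 * k + 1)
    rw [ha.add_four, ha.add_one]
    exact le_add_of_nonneg_right (by positivity)
  · show a (6 * k + 5) ≤ a (6 * k + 2)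
    rw [ha.add_five, ha.add_two]
  · show a (6 * k + 6) ≤ a (6 * k + 3)
    rw [ha.add_six, ha.add_three]
    exact le_add_of_nonneg_right (by positivity)
  · show a (6 * (k + 1) + 1) ≤ a (6 * k + 4)
    rw [ha.add_one, ha.add_four]
    exact_mod_cast one_div_add_one_add_one_div_two_pow_le k.succ_pos
  · show a (6 * (k + 1) + 2) ≤ a (6 * k + 5)
    rw [ha.add_two, ha.add_five]
    gcongr <;> norm_num
  · show a (6 * (k + 1) + 3) ≤ a (6 * k + 6)
    rw [ha.add_three, ha.add_six]
    exact_mod_cast one_div_add_one_add_one_div_two_pow_le k.succ_pos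

theorem tendsto_zero (ha : Z3Example a) : Tendsto a atTop (𝓝 0) := by
  have hharm : Tendsto (fun k : ℕ => 1 / ((k : ℝ) + 1)) atTop (𝓝 0) :=
    tendsto_one_div_add_atTop_nhds_zero_nat
  have hgeom {x : ℝ} (hx : 1 < x) : Tendsto (fun k : ℕ => 1 / x ^ (k + 1)) atTop (𝓝 0) :=
    (tendsto_one_div_pow_atTop_nhds_zero hx).comp (tendsto_add_atTop_nat 1)
  have hsum : Tendsto (fun k : ℕ => 1 / ((k : ℝ) + 1) + 1 / 2 ^ (k + 1)) atTop (𝓝 0) := by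
    simpa only [add_zero] using hharm.add (hgeom one_lt_two)
  have hten := hgeom (x := 10) (by norm_num)
  rw [← tendsto_add_atTop_iff_nat 1]
  refine Tendsto.of_comp_mul_add (p := 6) (by norm_num) fun r hr => ?_
  interval_cases r
  · exact hsum.congr fun k => (ha.add_one k).symm
  · exact hten.congr fun k => (ha.add_two k).symm
  · exact hsum.congr fun k => (ha.add_three k).symm
  · exact hharm.congr fun k => (ha.add_four k).symm
  · exact hten.congr fun k => (ha.add_five k).symm
  · exact hharm.congr fun k => (ha.add_six k).symm

theorem altSum_six_mul_add_six (ha : Z3Example a) (k : ℕ) :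
    altSum a (6 * k + 6) = altSum a (6 * k) + 1 / 2 ^ k := by
  rw [altSum_add_two (m := 6 * k + 4) ⟨3 * k + 2, by ring⟩,
    altSum_add_two (m := 6 * k + 2) ⟨3 * k + 1, by ring⟩,
    altSum_add_two (m := 6 * k) ⟨3 * k, by ring⟩,
    ha.add_one, ha.add_two, ha.add_three, ha.add_four, ha.add_five, ha.add_six]
  field_simp
  ring

theorem altSum_six_mul (ha : Z3Example a) (k : ℕ) : altSum a (6 * k) = 2 * (1 - 1 / 2 ^ k) := by
  induction k with
  | zero => simp [altSum]
  | succ k ih =>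
    rw [mul_add, mul_one, ha.altSum_six_mul_add_six, ih]
    ring

theorem tendsto_altSum (ha : Z3Example a) : Tendsto (altSum a) atTop (𝓝 2) := by
  refine Tendsto.of_comp_mul_of_sub (p := 6) (by norm_num) ?_
    (tendsto_altSum_succ_sub ha.tendsto_zero)
  simp only [ha.altSum_six_mul]
  simpa using ((tendsto_one_div_pow_atTop_nhds_zero one_lt_two).const_sub 1).const_mul 2

theorem two_sub_altSum_six_mul (ha : Z3Example a) {k : ℕ} (hk : 1 ≤ k) :
    2 - altSum a (6 * k) = 1 / 2 ^ (k - 1) := by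
  obtain ⟨j, rfl⟩ := Nat.exists_eq_add_of_le' hk
  rw [ha.altSum_six_mul, Nat.add_sub_cancel, pow_succ]
  field_simp
  ring

end Z3Example

/-- The blockwise-defined sequence is `Z(3)`-monotonously decreasing, tends to
`0`, its alternating series converges to `2`, and `S_{6k} = 2(1 - 1/2^k)`, i.e.
`R_{6k} = 1/2^(k-1)`. -/
theorem Z3_series_example
    (a : ℕ → ℝ)
    (h1 : ∀ k : ℕ, 1 ≤ k → a (6 * k - 5) = 1 / (k : ℝ) + 1 / 2 ^ k)
    (h2 : ∀ k : ℕ, 1 ≤ k → a (6 * k - 4) = 1 / 10 ^ k)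
    (h3 : ∀ k : ℕ, 1 ≤ k → a (6 * k - 3) = 1 / (k : ℝ) + 1 / 2 ^ k)
    (h4 : ∀ k : ℕ, 1 ≤ k → a (6 * k - 2) = 1 / (k : ℝ))
    (h5 : ∀ k : ℕ, 1 ≤ k → a (6 * k - 1) = 1 / 10 ^ k)
    (h6 : ∀ k : ℕ, 1 ≤ k → a (6 * k) = 1 / (k : ℝ)) :
    (∀ n : ℕ, 1 ≤ n → a (n + 3) ≤ a n) ∧
    Tendsto a atTop (nhds 0) ∧
    Tendsto (fun m => ∑ n ∈ Finset.Icc 1 m, (-1 : ℝ) ^ (n + 1) * a n)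
      atTop (nhds 2) ∧
    (∀ k : ℕ, 1 ≤ k →
      ∑ n ∈ Finset.Icc 1 (6 * k), (-1 : ℝ) ^ (n + 1) * a n = 2 * (1 - 1 / 2 ^ k)) ∧
    (∀ k : ℕ, 1 ≤ k →
      2 - ∑ n ∈ Finset.Icc 1 (6 * k), (-1 : ℝ) ^ (n + 1) * a n = 1 / 2 ^ (k - 1)) := by
  have ha : Z3Example a := .of_blocks h1 h2 h3 h4 h5 h6
  exact ⟨fun n => ha.apply_add_three_le, ha.tendsto_zero, ha.tendsto_altSum,
    fun k _ => ha.altSum_six_mul k, fun k => ha.two_sub_altSum_six_mul⟩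
end
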